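/- arXiv:0901.1827 — 13 statements merged into one kernel-verified Lean document; each statement's English description precedes it below -/
import Mathlib

section
/- Let $n, k$ be positive integers with $\gcd(k,n)=1$ and let $F$ be a finite field with $2^n$ elements. Then there is no nonempty finite set $S$ of at most six distinct nonzero elements of $F$ such that $\sum_{x \in S} x = 0$, $\sum_{x \in S} x^{2^k+1} = 0$, and $\sum_{x \in S} x^{2^{2k}+1} = 0$. (Equivalently, the cyclic code of length $2^n-1$ with zero set $\{1, 2^k+1, 2^{2k}+1\}$ has minimum distance at least $7$, i.e., it is triple-error-correcting.) -/
/-!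
Let `σ` be a field endomorphism and `c_m = ∑_{x ∈ S} x σ^m(x)`. If `∑_{x ∈ S} x = 0`, `c_i = 0` for
`i < m` and `c_m ≠ 0`, then the functions `1, σ^0, …, σ^(2m-1)` on `S` are linearly independent:
pairing a relation with `σ^(a+m)` isolates the coefficient of `σ^a`. So `|S| ≥ 2m + 1`. For
`σ = x ↦ x^(2^k)` the hypotheses give `c_0 = (∑ x)^2 = c_1 = c_2 = 0`, hence `c_m = 0` for all `m`
as `|S| ≤ 6`, and since `gcd(k, n) = 1` every power of the Frobenius is a power of `σ`.

Now for every `a` the absolute trace satisfies `∑_{x ∈ S} Tr(ax) x = ∑_t a^(2^t) ∑_{x ∈ S} x^(2^t+1) = 0`,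
so `H_a = {x ∈ S | Tr(ax) = 1}` sums to zero and, applying `Tr(a ·)`, has even size. In
characteristic 2 a zero-sum set of distinct nonzero elements has at least three elements, so
`|S| ≤ 6` forces `H_a = ∅` or `H_a = S`: `Tr(a ·)` is constant on `S` for every `a`, which the
nondegeneracy of the trace form forbids for two distinct elements of `S`.
-/

open Finset

section Pairing
variable {F : Type*} [Field F] (σ : F →+* F) {S : Finset F}

lemma sum_pow_apply_mul_pow_add_apply (a d : ℕ) :
    ∑ x ∈ S, (σ ^ a) x * (σ ^ (a + d)) x = (σ ^ a) (∑ x ∈ S, x * (σ ^ d) x) := by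
  simp [map_sum, pow_add]

lemma sum_pow_apply_mul_pow_apply_eq_zero {m a b : ℕ}
    (hlow : ∀ i < m, ∑ x ∈ S, x * (σ ^ i) x = 0) (hab : a < b + m) (hba : b < a + m) :
    ∑ x ∈ S, (σ ^ a) x * (σ ^ b) x = 0 := by
  rcases le_total a b with h | h
  · obtain ⟨d, rfl⟩ := Nat.exists_eq_add_of_le h
    rw [sum_pow_apply_mul_pow_add_apply, hlow d (by omega), map_zero]
  · obtain ⟨d, rfl⟩ := Nat.exists_eq_add_of_le h
    rw [sum_congr rfl fun x _ => mul_comm _ _, sum_pow_apply_mul_pow_add_apply, hlow d (by omega),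
      map_zero]

theorem two_mul_add_one_le_card {m : ℕ} (hsum : ∑ x ∈ S, x = 0)
    (hlow : ∀ i < m, ∑ x ∈ S, x * (σ ^ i) x = 0) (hm : ∑ x ∈ S, x * (σ ^ m) x ≠ 0) :
    2 * m + 1 ≤ S.card := by
  let v : Option (Fin (2 * m)) → S → F := fun o x => o.elim 1 fun a => (σ ^ (a : ℕ)) x
  suffices hv : LinearIndependent F v by
    simpa using hv.fintype_card_le_finrank
  rw [Fintype.linearIndependent_iff]
  intro g hg
  have hpoint : ∀ x ∈ S, g none + ∑ a, g (some a) * (σ ^ (a : ℕ)) x = 0 := fun x hx => by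
    simpa [v, Fintype.sum_option] using congr_fun hg ⟨x, hx⟩
  have hpair : ∀ b, ∑ a, g (some a) * ∑ x ∈ S, (σ ^ (a : ℕ)) x * (σ ^ b) x = 0 := by
    intro b
    calc ∑ a, g (some a) * ∑ x ∈ S, (σ ^ (a : ℕ)) x * (σ ^ b) x
        = g none * (σ ^ b) (∑ x ∈ S, x)
          + ∑ x ∈ S, (∑ a, g (some a) * (σ ^ (a : ℕ)) x) * (σ ^ b) x := by
          rw [hsum, map_zero, mul_zero, zero_add]
          simp_rw [mul_sum, sum_mul, mul_assoc]
          exact sum_comm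
      _ = ∑ x ∈ S, (g none + ∑ a, g (some a) * (σ ^ (a : ℕ)) x) * (σ ^ b) x := by
          rw [map_sum, mul_sum, ← sum_add_distrib]
          simp_rw [add_mul]
      _ = 0 := sum_eq_zero fun x hx => by rw [hpoint x hx, zero_mul]
  have hsome : ∀ a, g (some a) = 0 := by
    intro a
    induction a using WellFoundedLT.induction with
    | ind a IH =>
      have h := hpair (a + m)
      rw [sum_eq_single a] at h
      · refine (mul_eq_zero.mp h).resolve_right ?_
        rw [sum_pow_apply_mul_pow_add_apply]
        exact (map_ne_zero _).mpr hm
      · intro a' _ ha'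
        rcases lt_or_gt_of_ne ha' with hlt | hlt
        · rw [IH a' hlt, zero_mul]
        · rw [sum_pow_apply_mul_pow_apply_eq_zero σ hlow (by omega) (by omega), mul_zero]
      · simp
  have hnone : g none = 0 := by
    obtain ⟨x, hx⟩ : S.Nonempty := nonempty_iff_ne_empty.mpr fun h => hm (by simp [h])
    simpa [hsome] using hpoint x hx
  intro o
  cases o with
  | none => exact hnone
  | some a => exact hsome a

theorem sum_mul_pow_apply_eq_zero {r : ℕ} (hcard : S.card ≤ 2 * r) (hsum : ∑ x ∈ S, x = 0)
    (hlow : ∀ i < r, ∑ x ∈ S, x * (σ ^ i) x = 0) (m : ℕ) :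
    ∑ x ∈ S, x * (σ ^ m) x = 0 := by
  induction m using Nat.strong_induction_on with
  | _ m IH =>
    by_contra hm
    have := two_mul_add_one_le_card σ hsum IH hm
    exact hm (hlow m (by omega))

end Pairing

section Frobenius
variable {F : Type*} [Field F] [CharP F 2]

lemma frobenius_pow_apply (t : ℕ) (x : F) :
    (frobenius F 2 ^ t) x = x ^ 2 ^ t := by
  rw [RingHom.coe_pow, iterate_frobenius]

theorem sum_mul_pow_two_pow_eq_zero [Fintype F] {n k : ℕ}
    (hF : Fintype.card F = 2 ^ n) (hgcd : Nat.gcd k n = 1) {S : Finset F} (hcard : S.card ≤ 6)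
    (h0 : ∑ x ∈ S, x = 0) (h1 : ∑ x ∈ S, x ^ (2 ^ k + 1) = 0)
    (h2 : ∑ x ∈ S, x ^ (2 ^ (2 * k) + 1) = 0) (t : ℕ) :
    ∑ x ∈ S, x * x ^ 2 ^ t = 0 := by
  have hφ : frobenius F 2 ^ n = 1 := FiniteField.frobenius_pow hF
  obtain ⟨m, hm⟩ := exists_pow_eq_self_of_coprime
    (Nat.Coprime.coprime_dvd_right (orderOf_dvd_of_pow_eq_one hφ) hgcd)
  have hlow : ∀ i < 3, ∑ x ∈ S, x * ((frobenius F 2 ^ k) ^ i) x = 0 := by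
    intro i hi
    simp_rw [← pow_mul, frobenius_pow_apply]
    interval_cases i
    · simp [← sq, ← sum_pow_char, h0]
    · simpa [← pow_succ'] using h1
    · simpa [← pow_succ', mul_comm k] using h2
  have := sum_mul_pow_apply_eq_zero _ hcard h0 hlow (m * t)
  simpa only [pow_mul, hm, frobenius_pow_apply] using this

end Frobenius

section CharTwo
variable {R : Type*} [Ring R] [CharP R 2]

lemma three_le_card_of_sum_eq_zero {T : Finset R} (h0 : (0 : R) ∉ T) (hne : T.Nonempty)
    (hsum : ∑ x ∈ T, x = 0) : 3 ≤ T.card := by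
  classical
  by_contra! h
  interval_cases hT : T.card
  · simp_all
  · obtain ⟨x, rfl⟩ := card_eq_one.mp hT
    simp_all
  · obtain ⟨x, y, hxy, rfl⟩ := card_eq_two.mp hT
    rw [sum_pair hxy, CharTwo.add_eq_zero] at hsum
    exact hxy hsum

lemma eq_empty_or_eq_of_sum_eq_zero {S T : Finset R} (hTS : T ⊆ S) (h0 : (0 : R) ∉ S)
    (hcard : S.card ≤ 6) (hS : ∑ x ∈ S, x = 0) (hT : ∑ x ∈ T, x = 0) (heven : Even T.card) :
    T = ∅ ∨ T = S := by
  classical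
  by_contra! h
  have hT3 := three_le_card_of_sum_eq_zero (fun h' => h0 (hTS h')) h.1 hT
  have hST3 := three_le_card_of_sum_eq_zero (fun h' => h0 (sdiff_subset h'))
    (sdiff_nonempty.mpr fun h' => h.2 (hTS.antisymm h'))
    (by rw [sum_sdiff_eq_sub hTS, hS, hT, sub_zero])
  have := card_sdiff_add_card_eq_card hTS
  obtain ⟨j, hj⟩ := heven
  omega

end CharTwo

section Trace
variable {F : Type*} [Field F] [Finite F] [Algebra (ZMod 2) F]

lemma sum_trace_mul_smul_eq_zero {S : Finset F} (hS : ∀ t, ∑ x ∈ S, x * x ^ 2 ^ t = 0) (a : F) :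
    ∑ x ∈ S, Algebra.trace (ZMod 2) F (a * x) • x = 0 := by
  simp_rw [Algebra.smul_def, FiniteField.algebraMap_trace_eq_sum_pow, Nat.card_zmod, sum_mul,
    mul_pow]
  rw [sum_comm]
  refine sum_eq_zero fun i _ => ?_
  rw [← mul_zero (a ^ 2 ^ i), ← hS i, mul_sum]
  exact sum_congr rfl fun x _ => by ring

lemma exists_trace_mul_ne {x y : F} (hxy : x ≠ y) :
    ∃ a, Algebra.trace (ZMod 2) F (a * x) ≠ Algebra.trace (ZMod 2) F (a * y) := by
  by_contra! h
  refine hxy (sub_eq_zero.mp ((traceForm_nondegenerate (ZMod 2) F).1 (x - y) fun a => ?_))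
  rw [Algebra.traceForm_apply, sub_mul, map_sub, mul_comm x, mul_comm y, h, sub_self]

lemma zmod_two_smul_eq_ite {M : Type*} [AddCommGroup M] [Module (ZMod 2) M] (c : ZMod 2) (v : M) :
    c • v = if c = 1 then v else 0 := by
  rcases (by decide : ∀ c : ZMod 2, c = 0 ∨ c = 1) c with rfl | rfl <;> simp

theorem trace_mul_eq_of_mem {S : Finset F} (h0 : (0 : F) ∉ S) (hcard : S.card ≤ 6)
    (hsum : ∑ x ∈ S, x = 0) (hS : ∀ t, ∑ x ∈ S, x * x ^ 2 ^ t = 0) (a : F) {x y : F}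
    (hx : x ∈ S) (hy : y ∈ S) :
    Algebra.trace (ZMod 2) F (a * x) = Algebra.trace (ZMod 2) F (a * y) := by
  have := charP_of_injective_algebraMap (algebraMap (ZMod 2) F).injective 2
  set τ := Algebra.trace (ZMod 2) F
  have hH : ∑ z ∈ S with τ (a * z) = 1, z = 0 :=
    calc ∑ z ∈ S with τ (a * z) = 1, z = ∑ z ∈ S, τ (a * z) • z := by
          rw [sum_filter]
          exact sum_congr rfl fun z _ => (zmod_two_smul_eq_ite _ _).symm
      _ = 0 := sum_trace_mul_smul_eq_zero hS a
  have heven : Even #{z ∈ S | τ (a * z) = 1} := by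
    rw [← ZMod.natCast_eq_zero_iff_even, ← map_zero τ, ← mul_zero a, ← hH, mul_sum, map_sum,
      sum_congr rfl fun z hz => (mem_filter.mp hz).2]
    simp
  have hne_one : ∀ c : ZMod 2, c ≠ 1 → c = 0 := by decide
  rcases eq_empty_or_eq_of_sum_eq_zero (filter_subset _ S) h0 hcard hsum hH heven with h | h
  · rw [filter_eq_empty_iff] at h
    rw [hne_one _ (h hx), hne_one _ (h hy)]
  · rw [filter_eq_self] at h
    rw [h x hx, h y hy]

theorem exists_sum_mul_pow_two_pow_ne_zero {S : Finset F} (hne : S.Nonempty)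
    (h0 : (0 : F) ∉ S) (hcard : S.card ≤ 6) (hsum : ∑ x ∈ S, x = 0) :
    ∃ t, ∑ x ∈ S, x * x ^ 2 ^ t ≠ 0 := by
  by_contra! hS
  have := charP_of_injective_algebraMap (algebraMap (ZMod 2) F).injective 2
  obtain ⟨x, hx, y, hy, hxy⟩ :=
    one_lt_card.mp (lt_of_lt_of_le (by norm_num) (three_le_card_of_sum_eq_zero h0 hne hsum))
  obtain ⟨a, ha⟩ := exists_trace_mul_ne hxy
  exact ha (trace_mul_eq_of_mem h0 hcard hsum hS a hx hy)

end Trace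

theorem stmt_0_general (n k : ℕ) (hgcd : Nat.gcd k n = 1)
    (F : Type*) [Field F] [Fintype F] (hF : Fintype.card F = 2 ^ n) :
    ¬ ∃ S : Finset F, S.Nonempty ∧ S.card ≤ 6 ∧ (0 : F) ∉ S ∧
      ∑ x ∈ S, x = 0 ∧
      ∑ x ∈ S, x ^ (2 ^ k + 1) = 0 ∧
      ∑ x ∈ S, x ^ (2 ^ (2 * k) + 1) = 0 := by
  rintro ⟨S, hne, hcard, h0S, h0, h1, h2⟩
  have := charP_of_card_eq_prime_pow hF
  let := ZMod.algebra F 2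
  obtain ⟨t, ht⟩ := exists_sum_mul_pow_two_pow_ne_zero hne h0S hcard h0
  exact ht (sum_mul_pow_two_pow_eq_zero hF hgcd hcard h0 h1 h2 t)

theorem stmt_0 (n k : ℕ) (hn : 0 < n) (hk : 0 < k) (hgcd : Nat.gcd k n = 1)
    (F : Type*) [Field F] [Fintype F] (hF : Fintype.card F = 2 ^ n) :
    ¬ ∃ S : Finset F, S.Nonempty ∧ S.card ≤ 6 ∧ (0 : F) ∉ S ∧
      ∑ x ∈ S, x = 0 ∧
      ∑ x ∈ S, x ^ (2 ^ k + 1) = 0 ∧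
      ∑ x ∈ S, x ^ (2 ^ (2 * k) + 1) = 0 :=
  stmt_0_general n k hgcd F hF
end

section
/- Let $n$ be an odd positive integer and $k$ a positive integer with $\gcd(k,n)=1$, and let $F$ be a finite field with $2^n$ elements. Then there is no nonempty finite set $S$ of at most six distinct nonzero elements of $F$ such that $\sum_{x \in S} x = 0$, $\sum_{x \in S} x^{2^k+1} = 0$, and $\sum_{x \in S} x^{2^{3k}+1} = 0$. (Equivalently, the cyclic code of length $2^n-1$ with zero set $\{1, 2^k+1, 2^{3k}+1\}$ has minimum distance at least $7$, i.e., it is triple-error-correcting.) -/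
section Aux

variable {F : Type*} [Field F]

private lemma pow_pow_fix (x : F) (a : ℕ) (hx : x ^ 2 ^ a = x) :
    ∀ q : ℕ, x ^ 2 ^ (a * q) = x
  | 0 => by simp
  | q + 1 => by
      rw [Nat.mul_succ, pow_add, pow_mul, pow_pow_fix x a hx q, hx]

private lemma pow_gcd_fix (x : F) : ∀ a b : ℕ,
    x ^ 2 ^ a = x → x ^ 2 ^ b = x → x ^ 2 ^ (Nat.gcd a b) = x := by
  intro a b
  induction a, b using Nat.gcd.induction with
  | H0 n => intro _ h; rwa [Nat.gcd_zero_left]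
  | H1 m n hm ih =>
      intro hma hnb
      rw [Nat.gcd_rec]
      refine ih ?_ hma
      have hq := pow_pow_fix x m hma (n / m)
      have h2 : (x ^ 2 ^ (m * (n / m))) ^ 2 ^ (n % m) = x := by
        rw [← pow_mul, ← pow_add, Nat.div_add_mod]; exact hnb
      rwa [hq] at h2

private lemma fixX (f : F →+* F) (hfix : ∀ x : F, f x = x → x = 0 ∨ x = 1)
    (x y : F) (hy : y ≠ 0) (h : f x * y = f y * x) : x = 0 ∨ x = y := by
  have hfy : f y ≠ 0 := fun h0 => hy (f.injective (by rw [h0, map_zero]))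
  have ht : f (x / y) = x / y := by
    rw [map_div₀, div_eq_div_iff hfy hy]
    linear_combination h
  rcases hfix _ ht with h0 | h1
  · exact Or.inl ((div_eq_zero_iff.mp h0).resolve_right hy)
  · exact Or.inr ((div_eq_one_iff_eq hy).mp h1)

private lemma W3 (f : F →+* F) (htwo : (2 : F) = 0)
    (hfix : ∀ x : F, f x = x → x = 0 ∨ x = 1)
    (x y z : F) (hx : x ≠ 0) (hy : y ≠ 0) (hxy : x ≠ y)
    (e1 : x + y + z = 0)
    (e2 : f x * x + f y * y + f z * z = 0) : False := by
  have hz : z = x + y := by linear_combination z * htwo - e1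
  rw [hz, map_add] at e2
  have key : f x * y = f y * x := by
    linear_combination e2 - (f x * x + f y * x + f y * y) * htwo
  rcases fixX f hfix x y hy key with h | h
  · exact hx h
  · exact hxy h

private lemma W4 (f : F →+* F) (htwo : (2 : F) = 0)
    (hfix : ∀ x : F, f x = x → x = 0 ∨ x = 1)
    (x1 x2 x3 x4 : F)
    (d12 : x1 ≠ x2) (d14 : x1 ≠ x4) (d24 : x2 ≠ x4)
    (e1 : x1 + x2 + x3 + x4 = 0)
    (e2 : f x1 * x1 + f x2 * x2 + f x3 * x3 + f x4 * x4 = 0) : False := by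
  have e1f := congrArg f e1
  simp only [map_add, map_zero] at e1f
  refine W3 f htwo hfix (x1 + x4) (x2 + x4) (x3 + x4) ?_ ?_ ?_ ?_ ?_
  · intro h; exact d14 (by linear_combination h - x4 * htwo)
  · intro h; exact d24 (by linear_combination h - x4 * htwo)
  · intro h; exact d12 (by linear_combination h)
  · linear_combination e1 + x4 * htwo
  · simp only [map_add]
    linear_combination e2 + f x4 * e1 + x4 * e1f

private lemma W5 (f : F →+* F) (htwo : (2 : F) = 0)
    (hfix : ∀ x : F, f x = x → x = 0 ∨ x = 1)
    (hfix2 : ∀ x : F, f (f x) = x → x = 0 ∨ x = 1)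
    (x1 x2 x3 x4 x5 : F)
    (h3 : x3 ≠ 0) (h4 : x4 ≠ 0) (h5 : x5 ≠ 0)
    (d12 : x1 ≠ x2) (d34 : x3 ≠ x4) (d35 : x3 ≠ x5) (d45 : x4 ≠ x5)
    (e1 : x1 + x2 + x3 + x4 + x5 = 0)
    (e2 : f x1 * x1 + f x2 * x2 + f x3 * x3 + f x4 * x4 + f x5 * x5 = 0)
    (e3 : f (f (f x1)) * x1 + f (f (f x2)) * x2 + f (f (f x3)) * x3
        + f (f (f x4)) * x4 + f (f (f x5)) * x5 = 0) : False := by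
  obtain ⟨a, ha⟩ : ∃ a, a = x1 + x2 := ⟨_, rfl⟩
  obtain ⟨b, hb⟩ : ∃ b, b = x3 + x4 := ⟨_, rfl⟩
  have hX2 : x2 = x1 + a := by linear_combination ha + (x2 - a) * htwo
  have hX4 : x4 = x3 + b := by linear_combination hb + (x4 - b) * htwo
  have hX5 : x5 = a + b := by
    linear_combination -e1 + ha + hb + (x1 + x2 + x3 + x4 + x5 - a - b) * htwo
  have hA : a ≠ 0 := by
    intro h
    exact d12 (by linear_combination -ha + h - x2 * htwo)
  have hB : b ≠ 0 := by
    intro h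
    exact d34 (by linear_combination -hb + h - x4 * htwo)
  rw [hX2, hX4, hX5] at e2 e3
  simp only [map_add] at e2 e3
  have A1 : f x1 * a + f a * x1 + f x3 * b + f b * x3 + f a * b + f b * a = 0 := by
    linear_combination e2 - (a * f a + b * f b + x1 * f x1 + x3 * f x3) * htwo
  have A4 : f (f (f x1)) * a + f (f (f a)) * x1 + f (f (f x3)) * b + f (f (f b)) * x3
      + f (f (f a)) * b + f (f (f b)) * a = 0 := by
    linear_combination e3 - (a * f (f (f a)) + b * f (f (f b))
      + x1 * f (f (f x1)) + x3 * f (f (f x3))) * htwo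
  have A2 := congrArg f A1
  have A3 := congrArg f A2
  simp only [map_add, map_mul, map_zero] at A2 A3
  have key : (x3 * f (f a) + f (f x3) * a) * (f b * f (f (f a)) + f (f (f b)) * f a)
      + (f x3 * f (f (f a)) + f (f (f x3)) * f a) * (b * f (f a) + f (f b) * a) = 0 := by
    linear_combination (f (f a) * f (f (f a))) * A1 + (a * f (f (f a))) * A2
      + (a * f a) * A3 + (f a * f (f a)) * A4
      - (a * f a * f (f a) * f (f (f b)) + a * f a * f (f a) * f (f (f x1))
        + a * f a * f (f b) * f (f (f a)) + a * f a * f (f (f a)) * f (f x1)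
        + a * f b * f (f a) * f (f (f a)) + a * f (f a) * f (f (f a)) * f x1
        + b * f a * f (f a) * f (f (f a)) + f a * f (f a) * f (f (f a)) * x1) * htwo
  have hDd : b * f (f a) + f (f b) * a ≠ 0 := by
    intro h
    have hcross : f (f b) * a = f (f a) * b := by
      linear_combination h - b * f (f a) * htwo
    rcases fixX (f.comp f) hfix2 b a hA hcross with h0 | h0
    · exact hB h0
    · exact h5 (by linear_combination hX5 + h0 + a * htwo)
  have hcrossKey : f (x3 * f (f a) + f (f x3) * a) * (b * f (f a) + f (f b) * a)
      = f (b * f (f a) + f (f b) * a) * (x3 * f (f a) + f (f x3) * a) := by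
    simp only [map_add, map_mul]
    linear_combination key - ((f b * f (f (f a)) + f (f (f b)) * f a)
      * (x3 * f (f a) + f (f x3) * a)) * htwo
  rcases fixX f hfix (x3 * f (f a) + f (f x3) * a) (b * f (f a) + f (f b) * a)
      hDd hcrossKey with hG0 | hGD
  · have hcross3 : f (f x3) * a = f (f a) * x3 := by
      linear_combination hG0 - x3 * f (f a) * htwo
    rcases fixX (f.comp f) hfix2 x3 a hA hcross3 with h0 | h0
    · exact h3 h0
    · exact d45 (by linear_combination -e1 + ha - h0 + (x1 + x2 + x3 + x4 - a) * htwo)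
  · have hcross4 : f (f x4) * a = f (f a) * x4 := by
      rw [hX4]
      simp only [map_add]
      linear_combination hGD + (a * f (f b) - x3 * f (f a)) * htwo
    rcases fixX (f.comp f) hfix2 x4 a hA hcross4 with h0 | h0
    · exact h4 h0
    · exact d35 (by linear_combination -e1 + ha - h0 + (x1 + x2 + x3 + x4 - a) * htwo)

private lemma W6 (f : F →+* F) (htwo : (2 : F) = 0)
    (hfix : ∀ x : F, f x = x → x = 0 ∨ x = 1)
    (hfix2 : ∀ x : F, f (f x) = x → x = 0 ∨ x = 1)
    (x1 x2 x3 x4 x5 x6 : F)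
    (d12 : x1 ≠ x2) (d34 : x3 ≠ x4) (d35 : x3 ≠ x5) (d45 : x4 ≠ x5)
    (d36 : x3 ≠ x6) (d46 : x4 ≠ x6) (d56 : x5 ≠ x6)
    (e1 : x1 + x2 + x3 + x4 + x5 + x6 = 0)
    (e2 : f x1 * x1 + f x2 * x2 + f x3 * x3 + f x4 * x4 + f x5 * x5 + f x6 * x6 = 0)
    (e3 : f (f (f x1)) * x1 + f (f (f x2)) * x2 + f (f (f x3)) * x3
        + f (f (f x4)) * x4 + f (f (f x5)) * x5 + f (f (f x6)) * x6 = 0) : False := by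
  have e1f := congrArg f e1
  simp only [map_add, map_zero] at e1f
  have e1g := congrArg f (congrArg f e1f)
  simp only [map_add, map_zero] at e1g
  refine W5 f htwo hfix hfix2 (x1 + x6) (x2 + x6) (x3 + x6) (x4 + x6) (x5 + x6)
    ?_ ?_ ?_ ?_ ?_ ?_ ?_ ?_ ?_ ?_
  · intro h; exact d36 (by linear_combination h - x6 * htwo)
  · intro h; exact d46 (by linear_combination h - x6 * htwo)
  · intro h; exact d56 (by linear_combination h - x6 * htwo)
  · intro h; exact d12 (by linear_combination h)
  · intro h; exact d34 (by linear_combination h)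
  · intro h; exact d35 (by linear_combination h)
  · intro h; exact d45 (by linear_combination h)
  · linear_combination e1 + (2 * x6) * htwo
  · simp only [map_add]
    linear_combination e2 + f x6 * e1 + x6 * e1f + (f x6 * x6) * htwo
  · simp only [map_add]
    linear_combination e3 + f (f (f x6)) * e1 + x6 * e1g + (f (f (f x6)) * x6) * htwo

end Aux

theorem stmt_1 (n k : ℕ) (hn : 0 < n) (hodd : Odd n) (hk : 0 < k)
    (hgcd : Nat.gcd k n = 1)
    (F : Type*) [Field F] [Fintype F] (hF : Fintype.card F = 2 ^ n) :
    ¬ ∃ S : Finset F, S.Nonempty ∧ S.card ≤ 6 ∧ (0 : F) ∉ S ∧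
      ∑ x ∈ S, x = 0 ∧
      ∑ x ∈ S, x ^ (2 ^ k + 1) = 0 ∧
      ∑ x ∈ S, x ^ (2 ^ (3 * k) + 1) = 0 := by
  rintro ⟨S, hne, hcard, h0, e1, e2, e3⟩
  classical
  -- the characteristic is 2
  obtain ⟨p, hpc⟩ := CharP.exists F
  haveI := hpc
  have hp : p.Prime := CharP.char_is_prime F p
  obtain ⟨m, -, hcardF⟩ := FiniteField.card F p
  have hp2 : p = 2 := by
    have hdvd : p ∣ 2 ^ n := by
      rw [← hF, hcardF]
      exact dvd_pow_self p m.pos.ne'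
    exact (Nat.prime_dvd_prime_iff_eq hp Nat.prime_two).mp (hp.dvd_of_dvd_pow hdvd)
  subst hp2
  haveI : Fact (Nat.Prime 2) := ⟨Nat.prime_two⟩
  have htwo : (2 : F) = 0 := by exact_mod_cast CharP.cast_eq_zero F 2
  set f : F →+* F := iterateFrobenius F 2 k with hfdef
  have hfx : ∀ x : F, f x = x ^ 2 ^ k := fun x => rfl
  have hcardpow : ∀ x : F, x ^ 2 ^ n = x := by
    intro x; rw [← hF]; exact FiniteField.pow_card x
  have hfix_of : ∀ m : ℕ, Nat.gcd m n = 1 → ∀ x : F, x ^ 2 ^ m = x → x = 0 ∨ x = 1 := by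
    intro m hm x hx
    have h1 := pow_gcd_fix x m n hx (hcardpow x)
    rw [hm] at h1
    have hxx : x * (x - 1) = 0 := by linear_combination h1
    rcases mul_eq_zero.mp hxx with h | h
    · exact Or.inl h
    · exact Or.inr (sub_eq_zero.mp h)
  have hfix : ∀ x : F, f x = x → x = 0 ∨ x = 1 := by
    intro x hx
    rw [hfx] at hx
    exact hfix_of k hgcd x hx
  have hfix2 : ∀ x : F, f (f x) = x → x = 0 ∨ x = 1 := by
    intro x hx
    have hx' : x ^ 2 ^ (k + k) = x := by
      rw [pow_add, pow_mul, ← hfx, ← hfx]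
      exact hx
    have hg : Nat.gcd (k + k) n = 1 := by
      have h2n : Nat.Coprime 2 n := Nat.coprime_two_left.mpr hodd
      have := Nat.Coprime.mul h2n hgcd
      rw [show k + k = 2 * k by ring]
      exact this
    exact hfix_of (k + k) hg x hx'
  have hpow2 : ∀ x : F, x ^ (2 ^ k + 1) = f x * x := by
    intro x
    rw [pow_succ, hfx]
  have hexp : (2 : ℕ) ^ (3 * k) = 2 ^ k * (2 ^ k * 2 ^ k) := by
    rw [show 3 * k = k + (k + k) by ring, pow_add, pow_add]
  have hpow3 : ∀ x : F, x ^ (2 ^ (3 * k) + 1) = f (f (f x)) * x := by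
    intro x
    rw [pow_succ, hfx, hfx, hfx, ← pow_mul, ← pow_mul, ← hexp]
  simp only [hpow2] at e2
  simp only [hpow3] at e3
  have hpos : 0 < S.card := Finset.card_pos.mpr hne
  have hcases : S.card = 1 ∨ S.card = 2 ∨ S.card = 3 ∨ S.card = 4 ∨ S.card = 5 ∨ S.card = 6 := by
    omega
  rcases hcases with hc | hc | hc | hc | hc | hc
  · -- card 1
    obtain ⟨a1, T1, hm1, rfl, hT1⟩ := Finset.card_eq_succ.mp hc
    rw [Finset.card_eq_zero] at hT1; subst hT1
    rw [Finset.sum_insert hm1, Finset.sum_empty] at e1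
    simp only [Finset.mem_insert, Finset.notMem_empty, or_false, not_or] at h0
    exact h0 (by linear_combination -e1 : (0 : F) = a1)
  · -- card 2
    obtain ⟨a1, T1, hm1, rfl, hT1⟩ := Finset.card_eq_succ.mp hc
    obtain ⟨a2, T2, hm2, rfl, hT2⟩ := Finset.card_eq_succ.mp hT1
    rw [Finset.card_eq_zero] at hT2; subst hT2
    rw [Finset.sum_insert hm1, Finset.sum_insert hm2, Finset.sum_empty] at e1
    simp only [Finset.mem_insert, Finset.notMem_empty, or_false, not_or] at hm1
    exact hm1 (by linear_combination e1 - a2 * htwo : a1 = a2)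
  · -- card 3
    obtain ⟨a1, T1, hm1, rfl, hT1⟩ := Finset.card_eq_succ.mp hc
    obtain ⟨a2, T2, hm2, rfl, hT2⟩ := Finset.card_eq_succ.mp hT1
    obtain ⟨a3, T3, hm3, rfl, hT3⟩ := Finset.card_eq_succ.mp hT2
    rw [Finset.card_eq_zero] at hT3; subst hT3
    rw [Finset.sum_insert hm1, Finset.sum_insert hm2, Finset.sum_insert hm3,
      Finset.sum_empty] at e1 e2
    simp only [Finset.mem_insert, Finset.notMem_empty, or_false, not_or] at hm1 hm2 h0
    exact W3 f htwo hfix a1 a2 a3 (Ne.symm h0.1) (Ne.symm h0.2.1) hm1.1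
      (by linear_combination e1) (by linear_combination e2)
  · -- card 4
    obtain ⟨a1, T1, hm1, rfl, hT1⟩ := Finset.card_eq_succ.mp hc
    obtain ⟨a2, T2, hm2, rfl, hT2⟩ := Finset.card_eq_succ.mp hT1
    obtain ⟨a3, T3, hm3, rfl, hT3⟩ := Finset.card_eq_succ.mp hT2
    obtain ⟨a4, T4, hm4, rfl, hT4⟩ := Finset.card_eq_succ.mp hT3
    rw [Finset.card_eq_zero] at hT4; subst hT4
    rw [Finset.sum_insert hm1, Finset.sum_insert hm2, Finset.sum_insert hm3,
      Finset.sum_insert hm4, Finset.sum_empty] at e1 e2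
    simp only [Finset.mem_insert, Finset.notMem_empty, or_false, not_or] at hm1 hm2 h0
    exact W4 f htwo hfix a1 a2 a3 a4 hm1.1 hm1.2.2 hm2.2
      (by linear_combination e1) (by linear_combination e2)
  · -- card 5
    obtain ⟨a1, T1, hm1, rfl, hT1⟩ := Finset.card_eq_succ.mp hc
    obtain ⟨a2, T2, hm2, rfl, hT2⟩ := Finset.card_eq_succ.mp hT1
    obtain ⟨a3, T3, hm3, rfl, hT3⟩ := Finset.card_eq_succ.mp hT2
    obtain ⟨a4, T4, hm4, rfl, hT4⟩ := Finset.card_eq_succ.mp hT3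
    obtain ⟨a5, T5, hm5, rfl, hT5⟩ := Finset.card_eq_succ.mp hT4
    rw [Finset.card_eq_zero] at hT5; subst hT5
    rw [Finset.sum_insert hm1, Finset.sum_insert hm2, Finset.sum_insert hm3,
      Finset.sum_insert hm4, Finset.sum_insert hm5, Finset.sum_empty] at e1 e2 e3
    simp only [Finset.mem_insert, Finset.notMem_empty, or_false, not_or] at hm1 hm2 hm3 hm4 h0
    exact W5 f htwo hfix hfix2 a1 a2 a3 a4 a5
      (Ne.symm h0.2.2.1) (Ne.symm h0.2.2.2.1) (Ne.symm h0.2.2.2.2)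
      hm1.1 hm3.1 hm3.2 hm4
      (by linear_combination e1) (by linear_combination e2) (by linear_combination e3)
  · -- card 6
    obtain ⟨a1, T1, hm1, rfl, hT1⟩ := Finset.card_eq_succ.mp hc
    obtain ⟨a2, T2, hm2, rfl, hT2⟩ := Finset.card_eq_succ.mp hT1
    obtain ⟨a3, T3, hm3, rfl, hT3⟩ := Finset.card_eq_succ.mp hT2
    obtain ⟨a4, T4, hm4, rfl, hT4⟩ := Finset.card_eq_succ.mp hT3
    obtain ⟨a5, T5, hm5, rfl, hT5⟩ := Finset.card_eq_succ.mp hT4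
    obtain ⟨a6, T6, hm6, rfl, hT6⟩ := Finset.card_eq_succ.mp hT5
    rw [Finset.card_eq_zero] at hT6; subst hT6
    rw [Finset.sum_insert hm1, Finset.sum_insert hm2, Finset.sum_insert hm3,
      Finset.sum_insert hm4, Finset.sum_insert hm5, Finset.sum_insert hm6,
      Finset.sum_empty] at e1 e2 e3
    simp only [Finset.mem_insert, Finset.notMem_empty, or_false, not_or] at hm1 hm2 hm3 hm4 hm5
    exact W6 f htwo hfix hfix2 a1 a2 a3 a4 a5 a6
      hm1.1 hm3.1 hm3.2.1 hm4.1 hm3.2.2 hm4.2 hm5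
      (by linear_combination e1) (by linear_combination e2) (by linear_combination e3)
end

section
/- Let $n, s$ be positive integers with $\gcd(s,n)=1$, let $F$ be a finite field with $2^n$ elements, let $d \ge 0$, and let $r_0, r_1, \dots, r_d \in F$ be coefficients that are not all zero. Then the polynomial $f(x) = \sum_{i=0}^{d} r_i x^{2^{si}}$ has at most $2^d$ zeros in $F$, i.e., the set $\{x \in F : \sum_{i=0}^{d} r_i x^{2^{si}} = 0\}$ has cardinality at most $2^d$. -/
/-!
Write `σ x = x ^ 2 ^ s`; as `gcd(s, n) = 1`, the only fixed points of `σ` are `0` and `1`.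
If `a ≠ 0` is a root of `L = ∑_{i ≤ d} r_i σ^i`, summation by parts gives `L(a y) = L'(y - σ y)`,
where `L'` has `σ`-degree `d - 1` and its coefficients, the partial sums of those of `y ↦ L(a y)`,
are not all zero. The additive map `y ↦ y - σ y` has kernel `{0, 1}`, so `L` has at most twice as
many roots as `L'`; induction on `d` gives the bound `2 ^ d`.
-/

open Finset

lemma AddMonoidHom.ncard_preimage_le {G H : Type*} [AddGroup G] [AddGroup H] [Finite H]
    (f : G →+ H) (S : Set H) : (f ⁻¹' S).ncard ≤ (f.ker : Set G).ncard * S.ncard := by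
  have hfiber : ∀ y, (f ⁻¹' {y}).ncard ≤ (f.ker : Set G).ncard := by
    intro y
    rcases (f ⁻¹' {y}).eq_empty_or_nonempty with h | ⟨x, hx⟩
    · simp [h]
    have hcoset : f ⁻¹' {y} = (x + ·) '' f.ker := by
      ext z
      simp only [Set.mem_preimage, Set.mem_singleton_iff] at hx
      refine ⟨fun hz ↦ ⟨-x + z, ?_, add_neg_cancel_left x z⟩, ?_⟩
      · simp_all [f.mem_ker]
      · rintro ⟨k, hk, rfl⟩
        simp_all [f.mem_ker]
    rw [hcoset, Set.ncard_image_of_injective _ (add_right_injective x)]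
  have hS := S.toFinite
  calc (f ⁻¹' S).ncard = (⋃ y ∈ hS.toFinset, f ⁻¹' {y}).ncard := by simp
    _ ≤ ∑ y ∈ hS.toFinset, (f ⁻¹' {y}).ncard := Finset.set_ncard_biUnion_le _ _
    _ ≤ ∑ _y ∈ hS.toFinset, (f.ker : Set G).ncard := sum_le_sum fun y _ ↦ hfiber y
    _ = (f.ker : Set G).ncard * S.ncard := by
      rw [sum_const, smul_eq_mul, mul_comm, Set.ncard_eq_toFinset_card _ hS]

lemma exists_sum_range_succ_ne_zero {M : Type*} [AddCommGroup M] {c : ℕ → M} {d : ℕ}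
    (hc : ∃ i ≤ d + 1, c i ≠ 0) (hsum : ∑ i ∈ range (d + 2), c i = 0) :
    ∃ i ≤ d, ∑ j ∈ range (i + 1), c j ≠ 0 := by
  by_contra! h
  obtain ⟨i, hi, hci⟩ := hc
  have hpartial : ∀ k ≤ d + 2, ∑ j ∈ range k, c j = 0 := by
    rintro (_ | k) hk
    · simp
    · rcases Nat.lt_or_ge k (d + 1) with hk' | hk'
      · exact h k (by omega)
      · rwa [show k = d + 1 by omega]
  apply hci
  rw [← sum_range_succ_sub_sum (f := c), hpartial _ (by omega), hpartial _ (by omega), sub_zero]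

lemma sum_mul_pow_apply_eq_of_sum_eq_zero {R : Type*} [CommRing R] (σ : R →+* R) (c : ℕ → R)
    (d : ℕ) (hc : ∑ i ∈ range (d + 2), c i = 0) (y : R) :
    ∑ i ∈ range (d + 2), c i * (σ ^ i) y =
      ∑ i ∈ range (d + 1), (∑ j ∈ range (i + 1), c j) * (σ ^ i) (y - σ y) := by
  have hparts := sum_range_by_parts (fun i ↦ (σ ^ i) y) c (d + 2)
  simp only [smul_eq_mul, hc, mul_zero, zero_sub] at hparts
  rw [sum_congr rfl fun i _ ↦ mul_comm (c i) _, hparts, ← sum_neg_distrib]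
  refine sum_congr rfl fun i _ ↦ ?_
  have hsucc : (σ ^ (i + 1)) y = (σ ^ i) (σ y) := by rw [pow_succ]; rfl
  rw [map_sub, hsucc]
  ring

lemma sum_mul_pow_apply_mul_eq_of_root {R : Type*} [CommRing R] (σ : R →+* R) (r : ℕ → R)
    (d : ℕ) {a : R} (ha : ∑ i ∈ range (d + 2), r i * (σ ^ i) a = 0) (y : R) :
    ∑ i ∈ range (d + 2), r i * (σ ^ i) (a * y) =
      ∑ i ∈ range (d + 1), (∑ j ∈ range (i + 1), r j * (σ ^ j) a) * (σ ^ i) (y - σ y) := by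
  simp_rw [map_mul, ← mul_assoc]
  exact sum_mul_pow_apply_eq_of_sum_eq_zero σ _ d ha y

theorem ncard_setOf_sum_mul_pow_apply_eq_zero_le {F : Type*} [Field F] [Finite F] (σ : F →+* F)
    {m : ℕ} (hfix : {x | σ x = x}.ncard ≤ m) (d : ℕ) (r : ℕ → F) (hr : ∃ i ≤ d, r i ≠ 0) :
    {x | ∑ i ∈ range (d + 1), r i * (σ ^ i) x = 0}.ncard ≤ m ^ d := by
  induction d generalizing r with
  | zero =>
    obtain ⟨i, hi, hri⟩ := hr
    obtain rfl := Nat.le_zero.mp hi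
    simp [hri]
  | succ d ih =>
    set V := {x | ∑ i ∈ range (d + 2), r i * (σ ^ i) x = 0}
    by_cases hV : V ⊆ {0}
    · have hm : 0 < m := hfix.trans_lt' <| (Set.ncard_pos (Set.toFinite _)).2 ⟨0, map_zero σ⟩
      calc V.ncard ≤ ({0} : Set F).ncard := Set.ncard_le_ncard hV
        _ ≤ m ^ (d + 1) := by simpa using Nat.one_le_pow _ _ hm
    obtain ⟨a, haV, ha : a ≠ 0⟩ := Set.not_subset.1 hV
    set b : ℕ → F := fun i ↦ ∑ j ∈ range (i + 1), r j * (σ ^ j) a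
    set φ : F →+ F := AddMonoidHom.id F - σ.toAddMonoidHom
    have hb : ∃ i ≤ d, b i ≠ 0 := by
      refine exists_sum_range_succ_ne_zero ?_ haV
      obtain ⟨i, hi, hri⟩ := hr
      exact ⟨i, hi, mul_ne_zero hri ((map_ne_zero _).2 ha)⟩
    have hVφ : V = (a⁻¹ * ·) ⁻¹' (φ ⁻¹' {z | ∑ i ∈ range (d + 1), b i * (σ ^ i) z = 0}) := by
      ext x
      change _ = 0 ↔ ∑ i ∈ range (d + 1), b i * (σ ^ i) (a⁻¹ * x - σ (a⁻¹ * x)) = 0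
      rw [← sum_mul_pow_apply_mul_eq_of_root σ r d haV, mul_inv_cancel_left₀ ha]
    have hker : (φ.ker : Set F) = {x | σ x = x} := by
      ext x
      change x - σ x = 0 ↔ σ x = x
      rw [sub_eq_zero, eq_comm]
    calc V.ncard = (φ ⁻¹' {z | ∑ i ∈ range (d + 1), b i * (σ ^ i) z = 0}).ncard := by
          rw [hVφ, Set.ncard_preimage_of_injective_subset_range
            (mul_right_injective₀ (inv_ne_zero ha)) fun z _ ↦ ⟨a * z, inv_mul_cancel_left₀ ha z⟩]
      _ ≤ m * m ^ d := by
        grw [φ.ncard_preimage_le, hker, hfix, ih b hb]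
      _ = m ^ (d + 1) := (pow_succ' m d).symm

lemma FiniteField.pow_char_eq_self_of_pow_char_pow_eq_self {K : Type*} [Field K] [Fintype K]
    {p n s : ℕ} [ExpChar K p] (hK : Fintype.card K = p ^ n) (hgcd : s.gcd n = 1) {x : K}
    (hx : x ^ p ^ s = x) : x ^ p = x := by
  have hs : Function.IsPeriodicPt (frobenius K p) s x := by
    rw [Function.IsPeriodicPt, Function.IsFixedPt, iterate_frobenius, hx]
  have hn : Function.IsPeriodicPt (frobenius K p) n x := by
    rw [Function.IsPeriodicPt, Function.IsFixedPt, iterate_frobenius, ← hK, FiniteField.pow_card]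
  simpa [Function.IsPeriodicPt, Function.IsFixedPt, iterate_frobenius, frobenius_def, hgcd]
    using hs.gcd hn

lemma iterateFrobenius_pow_apply {R : Type*} [CommSemiring R] (p s i : ℕ) [ExpChar R p] (x : R) :
    (iterateFrobenius R p s ^ i) x = x ^ p ^ (s * i) := by
  rw [iterateFrobenius_eq_pow, ← pow_mul, ← iterateFrobenius_eq_pow, iterateFrobenius_def]

theorem stmt_2_general (n s : ℕ) (hgcd : Nat.gcd s n = 1)
    (F : Type*) [Field F] [Fintype F] (hF : Fintype.card F = 2 ^ n)
    (d : ℕ) (r : ℕ → F) (hr : ∃ i ≤ d, r i ≠ 0) :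
    {x : F | ∑ i ∈ Finset.range (d + 1), r i * x ^ (2 ^ (s * i)) = 0}.ncard ≤ 2 ^ d := by
  have : CharP F 2 := charP_of_card_eq_prime_pow hF
  have hfix : {x : F | iterateFrobenius F 2 s x = x}.ncard ≤ 2 := by
    refine (Set.ncard_le_ncard fun x hx ↦ ?_).trans (Set.ncard_pair zero_ne_one).le
    exact eq_zero_or_one_of_sq_eq_self
      (FiniteField.pow_char_eq_self_of_pow_char_pow_eq_self hF hgcd hx)
  simpa only [iterateFrobenius_pow_apply] using
    ncard_setOf_sum_mul_pow_apply_eq_zero_le _ hfix d r hr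

theorem stmt_2 (n s : ℕ) (hn : 0 < n) (hs : 0 < s) (hgcd : Nat.gcd s n = 1)
    (F : Type*) [Field F] [Fintype F] (hF : Fintype.card F = 2 ^ n)
    (d : ℕ) (r : ℕ → F) (hr : ∃ i ≤ d, r i ≠ 0) :
    {x : F | ∑ i ∈ Finset.range (d + 1), r i * x ^ (2 ^ (s * i)) = 0}.ncard ≤ 2 ^ d :=
  stmt_2_general n s hgcd F hF d r hr
end

section
/- Let $n, k$ be positive integers with $\gcd(k,n)=1$ and let $F$ be a finite field with $2^n$ elements. Then for all $b, c, d \in F$, the equation $x^{2^k+1} + b x^{2^k} + c x = d$ has at most three solutions $x \in F$. -/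
/-!
Fix one solution `x₀`. Writing `x = x₀ + z` and subtracting, the other solutions correspond
to the nonzero roots of `z ^ (q + 1) + B z ^ q + C z`, and `w = z⁻¹` turns these into the
solutions of `C w ^ q + B w = -1`, an equation for the additive map `w ↦ C w ^ q + B w`
(here `q = 2 ^ k`). Its solution set is a coset of the kernel, and a nonzero kernel element `u`
satisfies `u ^ (q - 1) = -B / C`. Since `gcd (2 ^ k - 1, 2 ^ n - 1) = 2 ^ gcd (k, n) - 1 = 1`,
the power map `u ↦ u ^ (q - 1)` is injective on `Fˣ`, so the kernel has at most two elements
and the equation at most `1 + 2` solutions.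
-/

open Set

theorem AddMonoidHom.ncard_setOf_eq_le_ncard_setOf_eq_zero {G H : Type*} [AddGroup G]
    [Finite G] [AddGroup H] (f : G →+ H) (a : H) :
    {x | f x = a}.ncard ≤ {x | f x = 0}.ncard := by
  rcases {x | f x = a}.eq_empty_or_nonempty with h | ⟨x₀, hx₀⟩
  · simp [h]
  refine ncard_le_ncard_of_injOn (· - x₀) (fun x hx ↦ ?_) sub_left_injective.injOn (toFinite _)
  simp_all [map_sub]

namespace Field

variable {F : Type*} [Field F]

theorem pow_injOn_of_coprime [Finite F] {e : ℕ} (h : (Nat.card F - 1).Coprime e) :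
    InjOn (· ^ e : F → F) {0}ᶜ := by
  intro u hu v hv huv
  have hcop : (Nat.card Fˣ).Coprime e := by rwa [Nat.card_units]
  have : Units.mk0 u hu = Units.mk0 v hv :=
    (powCoprime hcop).injective (Units.ext huv)
  exact congrArg Units.val this

theorem ncard_setOf_mul_pow_add_mul_eq_zero_le_two {q : ℕ} (hq : q ≠ 0)
    (hinj : InjOn (· ^ (q - 1) : F → F) {0}ᶜ) {C B : F} (hCB : C ≠ 0 ∨ B ≠ 0) :
    {u : F | C * u ^ q + B * u = 0}.ncard ≤ 2 := by
  set K := {u : F | C * u ^ q + B * u = 0}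
  have key : ∀ u ∈ K \ {0}, u ^ (q - 1) = -B / C := by
    rintro u ⟨hu : C * u ^ q + B * u = 0, hu0 : u ≠ 0⟩
    have hq' : q = q - 1 + 1 := (Nat.succ_pred_eq_of_ne_zero hq).symm
    have hroot : C * u ^ (q - 1) = -B := by
      refine mul_right_cancel₀ hu0 ?_
      rw [mul_assoc, ← pow_succ, ← hq']
      linear_combination hu
    have hC : C ≠ 0 := by
      rintro rfl
      exact hCB.resolve_left (not_not.mpr rfl) (by simpa using hroot.symm)
    rw [← hroot, mul_div_cancel_left₀ _ hC]
  have hK0 : (K \ {0}).Subsingleton := fun u hu v hv ↦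
    hinj hu.2 hv.2 ((key u hu).trans (key v hv).symm)
  have hK0card := (ncard_le_one hK0.finite).mpr fun u hu v hv ↦ hK0 hu hv
  have hKcard := pred_ncard_le_ncard_sdiff_singleton K 0
  omega

theorem inv_mem_setOf_mul_pow_add_mul_eq_neg_one {q : ℕ} {B C z : F} (hz : z ≠ 0)
    (h : z ^ (q + 1) + B * z ^ q + C * z = 0) : C * z⁻¹ ^ q + B * z⁻¹ = -1 := by
  have hzq : z ^ (q + 1) ≠ 0 := pow_ne_zero _ hz
  refine mul_left_cancel₀ hzq ?_
  rw [inv_pow, pow_succ]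
  field_simp
  linear_combination h

section CharTwo

variable [CharP F 2] (k : ℕ)

@[simps]
def linearizedHom (C B : F) : F →+ F where
  toFun w := C * w ^ 2 ^ k + B * w
  map_zero' := by simp
  map_add' x y := by
    simp only [add_pow_char_pow]
    ring

theorem ncard_setOf_mul_pow_add_mul_eq_le_two [Finite F]
    (hinj : InjOn (· ^ (2 ^ k - 1) : F → F) {0}ᶜ) (C B : F) {a : F} (ha : a ≠ 0) :
    {w : F | C * w ^ 2 ^ k + B * w = a}.ncard ≤ 2 := by
  by_cases hCB : C = 0 ∧ B = 0
  · obtain ⟨rfl, rfl⟩ := hCB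
    simp [ha.symm]
  have hfiber := (linearizedHom k C B).ncard_setOf_eq_le_ncard_setOf_eq_zero a
  simp only [linearizedHom_apply] at hfiber
  exact hfiber.trans <|
    ncard_setOf_mul_pow_add_mul_eq_zero_le_two (by positivity) hinj (not_and_or.mp hCB)

variable {k}

theorem sub_pow_succ_add_mul_sub_pow_add_mul_sub_eq_zero {b c d x₀ x : F}
    (h₀ : x₀ ^ (2 ^ k + 1) + b * x₀ ^ 2 ^ k + c * x₀ = d)
    (h : x ^ (2 ^ k + 1) + b * x ^ 2 ^ k + c * x = d) :
    (x - x₀) ^ (2 ^ k + 1) + (x₀ + b) * (x - x₀) ^ 2 ^ k + (x₀ ^ 2 ^ k + c) * (x - x₀) = 0 := by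
  rw [pow_succ] at h₀ h ⊢
  rw [sub_pow_char_pow]
  linear_combination h - h₀

theorem ncard_setOf_pow_succ_add_mul_pow_add_mul_eq_le_three [Finite F]
    (hinj : InjOn (· ^ (2 ^ k - 1) : F → F) {0}ᶜ) (b c d : F) :
    {x : F | x ^ (2 ^ k + 1) + b * x ^ 2 ^ k + c * x = d}.ncard ≤ 3 := by
  set S := {x : F | x ^ (2 ^ k + 1) + b * x ^ 2 ^ k + c * x = d}
  rcases S.eq_empty_or_nonempty with hS | ⟨x₀, hx₀⟩
  · simp [hS]
  have hmaps : ∀ x ∈ S \ {x₀},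
      (x - x₀)⁻¹ ∈ {w : F | (x₀ ^ 2 ^ k + c) * w ^ 2 ^ k + (x₀ + b) * w = -1} := by
    rintro x ⟨hx, hne⟩
    exact inv_mem_setOf_mul_pow_add_mul_eq_neg_one (sub_ne_zero.mpr hne)
      (sub_pow_succ_add_mul_sub_pow_add_mul_sub_eq_zero hx₀ hx)
  have hinjOn : InjOn (fun x ↦ (x - x₀)⁻¹) (S \ {x₀}) := fun x _ y _ hxy ↦
    sub_left_injective (inv_injective hxy)
  calc S.ncard = (S \ {x₀}).ncard + 1 := (ncard_sdiff_singleton_add_one hx₀).symm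
    _ ≤ 2 + 1 := by
      gcongr
      exact (ncard_le_ncard_of_injOn _ hmaps hinjOn (toFinite _)).trans
        (ncard_setOf_mul_pow_add_mul_eq_le_two k hinj _ _ (neg_ne_zero.mpr one_ne_zero))

end CharTwo

end Field

theorem stmt_3_general (n k : ℕ) (hn : 0 < n) (hgcd : Nat.gcd k n = 1)
    (F : Type*) [Field F] [Fintype F] (hF : Fintype.card F = 2 ^ n)
    (b c d : F) :
    {x : F | x ^ (2 ^ k + 1) + b * x ^ (2 ^ k) + c * x = d}.ncard ≤ 3 := by
  have : CharP F 2 := ringChar.of_eq <| FiniteField.even_card_iff_char_two.mpr <| by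
    rw [hF, ← Nat.even_iff]
    exact (Nat.even_pow' hn.ne').mpr even_two
  refine Field.ncard_setOf_pow_succ_add_mul_pow_add_mul_eq_le_three
    (Field.pow_injOn_of_coprime ?_) b c d
  rw [Nat.card_eq_fintype_card, hF, Nat.Coprime, Nat.pow_sub_one_gcd_pow_sub_one, Nat.gcd_comm,
    hgcd, pow_one]

theorem stmt_3 (n k : ℕ) (hn : 0 < n) (hk : 0 < k) (hgcd : Nat.gcd k n = 1)
    (F : Type*) [Field F] [Fintype F] (hF : Fintype.card F = 2 ^ n)
    (b c d : F) :
    {x : F | x ^ (2 ^ k + 1) + b * x ^ (2 ^ k) + c * x = d}.ncard ≤ 3 :=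
  stmt_3_general n k hn hgcd F hF b c d
end

section
/- Let $n \ge 4$ be an even integer, let $k$ be any positive integer, and let $F$ be a finite field with $2^n$ elements. Then there exists a nonempty set $S$ of at most six distinct nonzero elements of $F$ such that $\sum_{x \in S} x = 0$, $\sum_{x \in S} x^{2^k+1} = 0$, and $\sum_{x \in S} x^{2^{3k}+1} = 0$. (Equivalently, for even $n$ the cyclic code of length $2^n-1$ with zero set $\{1, 2^k+1, 2^{3k}+1\}$ has minimum distance at most $6$.) -/
theorem stmt_4 (n k : ℕ) (hn : 4 ≤ n) (hneven : Even n) (hk : 0 < k)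
    (F : Type*) [Field F] [Fintype F] (hF : Fintype.card F = 2 ^ n) :
    ∃ S : Finset F, S.Nonempty ∧ S.card ≤ 6 ∧ (0 : F) ∉ S ∧
      ∑ x ∈ S, x = 0 ∧
      ∑ x ∈ S, x ^ (2 ^ k + 1) = 0 ∧
      ∑ x ∈ S, x ^ (2 ^ (3 * k) + 1) = 0 := by
  classical
  -- characteristic 2
  have hc : ((Fintype.card F : ℕ) : F) = 0 := FiniteField.cast_card_eq_zero F
  rw [hF] at hc
  push_cast at hc
  have hchar2 : (2 : F) = 0 := pow_eq_zero_iff (n := n) (by omega) |>.mp hc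
  -- a primitive cube root of unity
  obtain ⟨i, hi⟩ := hneven
  have hω_ex : ∃ ω : F, ω ^ 3 = 1 ∧ ω ≠ 1 := by
    obtain ⟨t, ht⟩ : (3:ℕ) ∣ 4 ^ i - 1 := by simpa using Nat.sub_dvd_pow_sub_pow 4 1 i
    have h4i : 1 ≤ (4:ℕ) ^ i := Nat.one_le_pow i 4 (by norm_num)
    have hcard : (2:ℕ) ^ n = 4 ^ i := by rw [hi, ← two_mul, pow_mul]; norm_num
    haveI : Fact (Nat.Prime 3) := ⟨by norm_num⟩
    have h3 : (3:ℕ) ∣ Fintype.card Fˣ := by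
      rw [Fintype.card_units, hF, hcard]; exact ⟨t, by omega⟩
    obtain ⟨u, hu⟩ := exists_prime_orderOf_dvd_card 3 h3
    refine ⟨(u : F), ?_, ?_⟩
    · have : ((u ^ 3 : Fˣ) : F) = ((1 : Fˣ) : F) := by rw [← hu, pow_orderOf_eq_one]
      simpa using this
    · intro h
      have : u = 1 := Units.ext (by simpa using h)
      rw [this] at hu; simp at hu
  obtain ⟨ω, hω3, hω1⟩ := hω_ex
  have hω0 : ω ≠ 0 := by
    intro h; rw [h] at hω3; simp at hω3
  have hωq : ω ^ 2 + ω + 1 = 0 := by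
    have hfac : (ω - 1) * (ω ^ 2 + ω + 1) = 0 := by linear_combination hω3
    rcases mul_eq_zero.mp hfac with h | h
    · exact absurd (sub_eq_zero.mp h) hω1
    · exact h
  have hω2eq : ω ^ 2 = ω + 1 := by linear_combination hωq - (ω + 1) * hchar2
  have hinv : ω * ω ^ 2 = 1 := by linear_combination hω3
  rcases Nat.even_or_odd k with hke | hko
  · -- k even : S = {1, ω, ω²}
    obtain ⟨j, hj⟩ := hke
    obtain ⟨t, ht⟩ : (3:ℕ) ∣ 4 ^ j - 1 := by simpa using Nat.sub_dvd_pow_sub_pow 4 1 j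
    have h4j : 1 ≤ (4:ℕ) ^ j := Nat.one_le_pow j 4 (by norm_num)
    obtain ⟨t', ht'⟩ : (3:ℕ) ∣ 4 ^ (3*j) - 1 := by simpa using Nat.sub_dvd_pow_sub_pow 4 1 (3*j)
    have h4j' : 1 ≤ (4:ℕ) ^ (3*j) := Nat.one_le_pow _ 4 (by norm_num)
    have hk2 : (2:ℕ) ^ k = 4 ^ j := by rw [hj, ← two_mul, pow_mul]; norm_num
    have hk3 : (2:ℕ) ^ (3*k) = 4 ^ (3*j) := by
      rw [hj, show 3*(j+j) = 2*(3*j) by ring, pow_mul]; norm_num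
    have hm2 : 2 ^ k + 1 = 3 * t + 2 := by omega
    have hm3 : 2 ^ (3*k) + 1 = 3 * t' + 2 := by omega
    have hpow1 : ∀ m : ℕ, ω ^ (3*m+2) = ω ^ 2 := fun m => by
      rw [pow_add, pow_mul, hω3, one_pow, one_mul]
    have hpow2 : ∀ m : ℕ, (ω ^ 2) ^ (3*m+2) = ω := fun m => by
      rw [← pow_mul, show 2*(3*m+2) = 3*(2*m+1)+1 by ring, pow_add, pow_mul, hω3, one_pow,
        one_mul, pow_one]
    have hne12 : (1:F) ≠ ω := Ne.symm hω1
    have hne13 : (1:F) ≠ ω ^ 2 := by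
      intro h; exact hω0 (by linear_combination hωq - h - ω ^ 2 * hchar2)
    have hne23 : ω ≠ ω ^ 2 := by
      intro h
      have : ω * ω = ω * 1 := by linear_combination -h
      exact hω1 (mul_left_cancel₀ hω0 this)
    have nm1 : (1:F) ∉ ({ω, ω ^ 2} : Finset F) := by
      simp only [Finset.mem_insert, Finset.mem_singleton, not_or]
      exact ⟨hne12, hne13⟩
    have nm2 : ω ∉ ({ω ^ 2} : Finset F) := by
      simp only [Finset.mem_singleton]; exact hne23
    refine ⟨{1, ω, ω ^ 2}, ⟨1, by simp⟩, ?_, ?_, ?_, ?_, ?_⟩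
    · have c1 := Finset.card_insert_le (1:F) ({ω, ω ^ 2} : Finset F)
      have c2 := Finset.card_insert_le ω ({ω ^ 2} : Finset F)
      have c3 : ({ω ^ 2} : Finset F).card = 1 := Finset.card_singleton _
      omega
    · simp only [Finset.mem_insert, Finset.mem_singleton, not_or]
      refine ⟨by simp, Ne.symm hω0, ?_⟩
      intro h
      exact hω0 (pow_eq_zero_iff (n := 2) (by norm_num) |>.mp h.symm)
    · rw [Finset.sum_insert nm1, Finset.sum_insert nm2, Finset.sum_singleton]
      linear_combination hωq
    · rw [Finset.sum_insert nm1, Finset.sum_insert nm2, Finset.sum_singleton, hm2, one_pow,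
        hpow1 t, hpow2 t]
      linear_combination hωq
    · rw [Finset.sum_insert nm1, Finset.sum_insert nm2, Finset.sum_singleton, hm3, one_pow,
        hpow1 t', hpow2 t']
      linear_combination hωq
  · -- k odd : S = {1, b, 1+b, ω, ωb, ω(1+b)} with b ∉ {0,1,ω,ω²}
    obtain ⟨j, hj⟩ := hko
    obtain ⟨t, ht⟩ : (3:ℕ) ∣ 4 ^ j - 1 := by simpa using Nat.sub_dvd_pow_sub_pow 4 1 j
    have h4j : 1 ≤ (4:ℕ) ^ j := Nat.one_le_pow j 4 (by norm_num)
    obtain ⟨t', ht'⟩ : (3:ℕ) ∣ 4 ^ (3*j+1) - 1 := by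
      simpa using Nat.sub_dvd_pow_sub_pow 4 1 (3*j+1)
    have h4j' : 1 ≤ (4:ℕ) ^ (3*j+1) := Nat.one_le_pow _ 4 (by norm_num)
    have hk2 : (2:ℕ) ^ k = 4 ^ j * 2 := by rw [hj, pow_succ, pow_mul]; norm_num
    have hk3 : (2:ℕ) ^ (3*k) = 4 ^ (3*j+1) * 2 := by
      rw [hj, show 3*(2*j+1) = 2*(3*j+1)+1 by ring, pow_succ, pow_mul]; norm_num
    have hm2 : 2 ^ k + 1 = 3 * (2*t+1) := by omega
    have hm3 : 2 ^ (3*k) + 1 = 3 * (2*t'+1) := by omega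
    have hωd2 : ω ^ (2 ^ k + 1) = 1 := by rw [hm2, pow_mul, hω3, one_pow]
    have hωd3 : ω ^ (2 ^ (3*k) + 1) = 1 := by rw [hm3, pow_mul, hω3, one_pow]
    -- choose b outside {0, 1, ω, ω²}
    obtain ⟨b, hb⟩ : ∃ b : F, b ∉ ({0, 1, ω, ω ^ 2} : Finset F) := by
      have c1 := Finset.card_insert_le (0:F) ({1, ω, ω ^ 2} : Finset F)
      have c2 := Finset.card_insert_le (1:F) ({ω, ω ^ 2} : Finset F)
      have c3 := Finset.card_insert_le ω ({ω ^ 2} : Finset F)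
      have c4 : ({ω ^ 2} : Finset F).card = 1 := Finset.card_singleton _
      have h16 : 16 ≤ Fintype.card F := by
        rw [hF]
        calc (16:ℕ) = 2 ^ 4 := by norm_num
          _ ≤ 2 ^ n := Nat.pow_le_pow_right (by norm_num) hn
      by_contra hco
      push_neg at hco
      have hsub : Finset.univ ⊆ ({0, 1, ω, ω ^ 2} : Finset F) := fun x _ => hco x
      have := Finset.card_le_card hsub
      rw [Finset.card_univ] at this
      omega
    simp only [Finset.mem_insert, Finset.mem_singleton, not_or] at hb
    obtain ⟨hb0, hb1, hbω, hbω2⟩ := hb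
    have hb1' : (1:F) + b ≠ 0 := by
      intro h; exact hb1 (by linear_combination h - hchar2)
    -- pairwise disequalities
    have hne_1b : (1:F) ≠ b := Ne.symm hb1
    have hne_1_1b : (1:F) ≠ 1 + b := fun h => hb0 (by linear_combination -h)
    have hne_1ω : (1:F) ≠ ω := Ne.symm hω1
    have hne_1ωb : (1:F) ≠ ω * b := by
      intro h
      apply hbω2
      have : ω * b = ω * ω ^ 2 := by rw [hinv, ← h]
      exact mul_left_cancel₀ hω0 this
    have hne_1ω1b : (1:F) ≠ ω * (1 + b) := by
      intro h
      apply hbω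
      have e1 : ω * (1 + b) = ω * ω ^ 2 := by rw [hinv, ← h]
      have e2 := mul_left_cancel₀ hω0 e1
      linear_combination e2 + hω2eq
    have hne_b_1b : b ≠ 1 + b := by
      intro h; exact one_ne_zero (α := F) (by linear_combination -h)
    have hne_b_ωb : b ≠ ω * b := by
      intro h
      apply hω1
      have : b * ω = b * 1 := by linear_combination -h
      exact mul_left_cancel₀ hb0 this
    have hne_b_ω1b : b ≠ ω * (1 + b) := by
      intro h
      apply hbω2
      have e1 : ω ^ 2 * b = ω := by
        linear_combination b * hωq - h + (-ω - ω * b) * hchar2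
      have e2 : ω * (ω ^ 2 * b) = ω * ω := by rw [e1]
      linear_combination e2 - b * hω3
    have hne_1b_ω : (1:F) + b ≠ ω := by
      intro h
      apply hbω2
      linear_combination h - hω2eq - hchar2
    have hne_1b_ωb : (1:F) + b ≠ ω * b := by
      intro h
      apply hbω
      have e1 : ω ^ 2 * b = 1 := by
        linear_combination b * hωq - h - ω * b * hchar2
      have e2 : ω * (ω ^ 2 * b) = ω * 1 := by rw [e1]
      linear_combination e2 - b * hω3
    have hne_1b_ω1b : (1:F) + b ≠ ω * (1 + b) := by
      intro h
      apply hω1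
      have : (1 + b) * ω = (1 + b) * 1 := by linear_combination -h
      exact mul_left_cancel₀ hb1' this
    have hne_ω_ωb : ω ≠ ω * b := by
      intro h
      apply hb1
      have : ω * b = ω * 1 := by linear_combination -h
      exact mul_left_cancel₀ hω0 this
    have hne_ω_ω1b : ω ≠ ω * (1 + b) := by
      intro h
      apply hb0
      have e : ω * (1 + b) = ω * 1 := by linear_combination -h
      have := mul_left_cancel₀ hω0 e
      linear_combination this
    have hne_ωb_ω1b : ω * b ≠ ω * (1 + b) := by
      intro h
      have := mul_left_cancel₀ hω0 h
      exact one_ne_zero (α := F) (by linear_combination -this)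
    have nm1 : (1:F) ∉ ({b, 1 + b, ω, ω * b, ω * (1 + b)} : Finset F) := by
      simp only [Finset.mem_insert, Finset.mem_singleton, not_or]
      exact ⟨hne_1b, hne_1_1b, hne_1ω, hne_1ωb, hne_1ω1b⟩
    have nm2 : b ∉ ({1 + b, ω, ω * b, ω * (1 + b)} : Finset F) := by
      simp only [Finset.mem_insert, Finset.mem_singleton, not_or]
      exact ⟨hne_b_1b, hbω, hne_b_ωb, hne_b_ω1b⟩
    have nm3 : (1:F) + b ∉ ({ω, ω * b, ω * (1 + b)} : Finset F) := by
      simp only [Finset.mem_insert, Finset.mem_singleton, not_or]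
      exact ⟨hne_1b_ω, hne_1b_ωb, hne_1b_ω1b⟩
    have nm4 : ω ∉ ({ω * b, ω * (1 + b)} : Finset F) := by
      simp only [Finset.mem_insert, Finset.mem_singleton, not_or]
      exact ⟨hne_ω_ωb, hne_ω_ω1b⟩
    have nm5 : ω * b ∉ ({ω * (1 + b)} : Finset F) := by
      simp only [Finset.mem_singleton]; exact hne_ωb_ω1b
    refine ⟨{1, b, 1 + b, ω, ω * b, ω * (1 + b)}, ⟨1, by simp⟩, ?_, ?_, ?_, ?_, ?_⟩
    · have c1 := Finset.card_insert_le (1:F) ({b, 1 + b, ω, ω * b, ω * (1 + b)} : Finset F)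
      have c2 := Finset.card_insert_le b ({1 + b, ω, ω * b, ω * (1 + b)} : Finset F)
      have c3 := Finset.card_insert_le ((1:F) + b) ({ω, ω * b, ω * (1 + b)} : Finset F)
      have c4 := Finset.card_insert_le ω ({ω * b, ω * (1 + b)} : Finset F)
      have c5 := Finset.card_insert_le (ω * b) ({ω * (1 + b)} : Finset F)
      have c6 : ({ω * (1 + b)} : Finset F).card = 1 := Finset.card_singleton _
      omega
    · simp only [Finset.mem_insert, Finset.mem_singleton, not_or]
      exact ⟨by simp, Ne.symm hb0, Ne.symm hb1', Ne.symm hω0,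
        Ne.symm (mul_ne_zero hω0 hb0), Ne.symm (mul_ne_zero hω0 hb1')⟩
    · rw [Finset.sum_insert nm1, Finset.sum_insert nm2, Finset.sum_insert nm3,
        Finset.sum_insert nm4, Finset.sum_insert nm5, Finset.sum_singleton]
      linear_combination (1 + b + ω + ω * b) * hchar2
    · rw [Finset.sum_insert nm1, Finset.sum_insert nm2, Finset.sum_insert nm3,
        Finset.sum_insert nm4, Finset.sum_insert nm5, Finset.sum_singleton]
      simp only [one_pow, mul_pow, hωd2, one_mul]
      linear_combination (1 + b ^ (2 ^ k + 1) + (1 + b) ^ (2 ^ k + 1)) * hchar2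
    · rw [Finset.sum_insert nm1, Finset.sum_insert nm2, Finset.sum_insert nm3,
        Finset.sum_insert nm4, Finset.sum_insert nm5, Finset.sum_singleton]
      simp only [one_pow, mul_pow, hωd3, one_mul]
      linear_combination (1 + b ^ (2 ^ (3*k) + 1) + (1 + b) ^ (2 ^ (3*k) + 1)) * hchar2
end

section
/- Let $n \ge 4$ be an even integer and $k$ an odd positive integer, and let $F$ be a finite field with $2^n$ elements. Let $\delta \in F$ satisfy $\delta^2 + \delta + 1 = 0$ (such $\delta$ exists since $n$ is even). Suppose $x, y, z \in F$ are nonzero elements with $x + y + z = 0$ and $x/y \notin \{1, \delta, \delta^2\}$. Then the six elements $x, y, z, \delta x, \delta y, \delta z$ are pairwise distinct and nonzero, their sum is $0$, the sum of their $(2^k+1)$-th powers is $0$, and the sum of their $(2^{3k}+1)$-th powers is $0$. -/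
theorem stmt_5 (n k : ℕ) (hn : 4 ≤ n) (hneven : Even n) (hk : 0 < k) (hkodd : Odd k)
    (F : Type*) [Field F] [Fintype F] (hF : Fintype.card F = 2 ^ n)
    (δ : F) (hδ : δ ^ 2 + δ + 1 = 0)
    (x y z : F) (hx : x ≠ 0) (hy : y ≠ 0) (hz : z ≠ 0)
    (hsum : x + y + z = 0) (hratio : x / y ∉ ({1, δ, δ ^ 2} : Set F)) :
    ([x, y, z, δ * x, δ * y, δ * z] : List F).Pairwise (· ≠ ·) ∧
    (∀ w ∈ ([x, y, z, δ * x, δ * y, δ * z] : List F), w ≠ 0) ∧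
    x + y + z + δ * x + δ * y + δ * z = 0 ∧
    x ^ (2 ^ k + 1) + y ^ (2 ^ k + 1) + z ^ (2 ^ k + 1)
      + (δ * x) ^ (2 ^ k + 1) + (δ * y) ^ (2 ^ k + 1) + (δ * z) ^ (2 ^ k + 1) = 0 ∧
    x ^ (2 ^ (3 * k) + 1) + y ^ (2 ^ (3 * k) + 1) + z ^ (2 ^ (3 * k) + 1)
      + (δ * x) ^ (2 ^ (3 * k) + 1) + (δ * y) ^ (2 ^ (3 * k) + 1)
      + (δ * z) ^ (2 ^ (3 * k) + 1) = 0 := by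
  -- characteristic 2
  have hcard := FiniteField.cast_card_eq_zero F
  rw [hF] at hcard
  push_cast at hcard
  have h2 : (2 : F) = 0 := by
    have := pow_eq_zero_iff (n := n) (by omega) |>.mp hcard
    exact this
  have hδ0 : δ ≠ 0 := by
    intro h; rw [h] at hδ; simp at hδ
  have hδ1 : δ ≠ 1 := by
    intro h; rw [h] at hδ; norm_num at hδ
    exact one_ne_zero (by linear_combination hδ - h2)
  have hδ3 : δ ^ 3 = 1 := by linear_combination (δ - 1) * hδ
  have hδsq : δ ^ 2 = δ + 1 := by linear_combination hδ - (δ + 1) * h2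
  -- ratio hypotheses
  simp only [Set.mem_insert_iff, Set.mem_singleton_iff, not_or] at hratio
  obtain ⟨hr1, hrδ, hrδ2⟩ := hratio
  have hxy : x ≠ y := fun h => hr1 (by rw [h, div_self hy])
  have hxδy : x ≠ δ * y := fun h => hrδ (by rw [h, mul_div_assoc, div_self hy, mul_one])
  have hxδ2y : x ≠ δ ^ 2 * y := fun h => hrδ2 (by rw [h, mul_div_assoc, div_self hy, mul_one])
  have hzxy : z = x + y := by linear_combination hsum - (x + y) * h2
  have hδmul : ∀ a : F, a ≠ 0 → a ≠ δ * a := by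
    intro a ha h
    have h' : (δ - 1) * a = 0 := by linear_combination -h
    rcases mul_eq_zero.mp h' with h'' | h''
    · exact hδ1 (by linear_combination h'')
    · exact ha h''
  have hxz : x ≠ z := by
    rw [hzxy]; intro h; exact hy (by linear_combination -h)
  have hyz : y ≠ z := by
    rw [hzxy]; intro h; exact hx (by linear_combination -h)
  have hxδz : x ≠ δ * z := by
    rw [hzxy]; intro h
    exact hxδ2y (by linear_combination δ * h + x * hδ - δ * x * h2)
  have hyδx : y ≠ δ * x := by
    intro h
    exact hxδ2y (by linear_combination -(δ ^ 2) * h - x * hδ3)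
  have hyδz : y ≠ δ * z := by
    rw [hzxy]; intro h
    exact hxδy (by linear_combination (-δ ^ 2) * h + (-x - y) * hδ3 + y * hδ + (-(δ + 1) * y) * h2)
  have hzδx : z ≠ δ * x := by
    rw [hzxy]; intro h
    exact hxδy (by linear_combination (-δ) * h - x * hδ + (δ + 1) * x * h2)
  have hzδy : z ≠ δ * y := by
    rw [hzxy]; intro h
    exact hxδ2y (by linear_combination h + (-y) * hδ + δ * y * h2)
  -- divisibility: 3 ∣ 2^k + 1 and 3 ∣ 2^(3k) + 1 for odd k
  have key3 : ∀ m : ℕ, Odd m → 3 ∣ 2 ^ m + 1 := by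
    intro m hm
    have : ((2 ^ m + 1 : ℕ) : ZMod 3) = 0 := by
      push_cast
      have : (2 : ZMod 3) = -1 := by decide
      rw [this, hm.neg_one_pow]
      ring
    exact (ZMod.natCast_eq_zero_iff _ _).mp this
  have hδpow : ∀ e : ℕ, 3 ∣ e → δ ^ e = 1 := by
    rintro e ⟨m, rfl⟩
    rw [pow_mul, hδ3, one_pow]
  have hδe1 : δ ^ (2 ^ k + 1) = 1 := hδpow _ (key3 k hkodd)
  have hδe2 : δ ^ (2 ^ (3 * k) + 1) = 1 := hδpow _ (key3 (3 * k) (by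
    rcases hkodd with ⟨j, rfl⟩; exact ⟨3 * j + 1, by ring⟩))
  refine ⟨?_, ?_, ?_, ?_, ?_⟩
  · simp only [List.pairwise_cons, List.mem_cons, List.mem_singleton, List.not_mem_nil,
      List.Pairwise.nil, forall_eq_or_imp, forall_eq, or_false, false_imp_iff, and_true,
      List.Pairwise.nil]
    exact ⟨⟨hxy, hxz, hδmul x hx, hxδy, hxδz⟩, ⟨hyz, hyδx, hδmul y hy, hyδz⟩,
      ⟨hzδx, hzδy, hδmul z hz⟩,
      ⟨fun h => hxy (mul_left_cancel₀ hδ0 h), fun h => hxz (mul_left_cancel₀ hδ0 h)⟩,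
      fun h => hyz (mul_left_cancel₀ hδ0 h), fun _ => trivial⟩
  · intro w hw
    simp only [List.mem_cons, List.not_mem_nil, or_false] at hw
    rcases hw with rfl | rfl | rfl | rfl | rfl | rfl
    exacts [hx, hy, hz, mul_ne_zero hδ0 hx, mul_ne_zero hδ0 hy, mul_ne_zero hδ0 hz]
  · linear_combination (1 + δ) * hsum
  · simp only [mul_pow, hδe1, one_mul]
    linear_combination (x ^ (2 ^ k + 1) + y ^ (2 ^ k + 1) + z ^ (2 ^ k + 1)) * h2
  · simp only [mul_pow, hδe2, one_mul]
    linear_combination (x ^ (2 ^ (3 * k) + 1) + y ^ (2 ^ (3 * k) + 1) + z ^ (2 ^ (3 * k) + 1)) * h2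
end

section
/- Let $n$ be an even positive integer and $k$ an even positive integer, and let $F$ be a finite field with $2^n$ elements. Let $\delta \in F$ satisfy $\delta^2 + \delta + 1 = 0$. Then for every nonzero $x \in F$, the three elements $x, \delta x, \delta^2 x$ are pairwise distinct and nonzero, and $x + \delta x + \delta^2 x = 0$, $x^{2^k+1} + (\delta x)^{2^k+1} + (\delta^2 x)^{2^k+1} = 0$, and $x^{2^{3k}+1} + (\delta x)^{2^{3k}+1} + (\delta^2 x)^{2^{3k}+1} = 0$. (Hence for $n$ and $k$ even the code with zero set $\{1, 2^k+1, 2^{3k}+1\}$ has a codeword of weight three.) -/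
lemma aux_pow_mod3 {F : Type*} [Field F] (δ : F) (hδ3 : δ ^ 3 = 1) (e : ℕ) :
    δ ^ e = δ ^ (e % 3) := by
  conv_lhs => rw [← Nat.div_add_mod e 3]
  rw [pow_add, pow_mul, hδ3, one_pow, one_mul]

lemma aux_mod3 (k : ℕ) (hkeven : Even k) : (2 ^ k + 1) % 3 = 2 := by
  obtain ⟨m, rfl⟩ := hkeven
  have : 2 ^ (m + m) = 4 ^ m := by rw [pow_add, ← mul_pow]; norm_num
  rw [this, Nat.add_mod, Nat.pow_mod]
  simp

theorem stmt_6 (n k : ℕ) (hn : 0 < n) (hneven : Even n) (hk : 0 < k) (hkeven : Even k)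
    (F : Type*) [Field F] [Fintype F] (hF : Fintype.card F = 2 ^ n)
    (δ : F) (hδ : δ ^ 2 + δ + 1 = 0)
    (x : F) (hx : x ≠ 0) :
    (x ≠ δ * x ∧ x ≠ δ ^ 2 * x ∧ δ * x ≠ δ ^ 2 * x) ∧
    (x ≠ 0 ∧ δ * x ≠ 0 ∧ δ ^ 2 * x ≠ 0) ∧
    x + δ * x + δ ^ 2 * x = 0 ∧
    x ^ (2 ^ k + 1) + (δ * x) ^ (2 ^ k + 1) + (δ ^ 2 * x) ^ (2 ^ k + 1) = 0 ∧
    x ^ (2 ^ (3 * k) + 1) + (δ * x) ^ (2 ^ (3 * k) + 1) + (δ ^ 2 * x) ^ (2 ^ (3 * k) + 1) = 0 := by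
  -- characteristic 2
  obtain ⟨p, hp⟩ := CharP.exists F
  have hpp : p.Prime := CharP.char_is_prime F p
  have hp2 : p = 2 := by
    obtain ⟨m, _, hcard⟩ := FiniteField.card F p
    have : p ∣ 2 ^ n := by
      rw [← hF, hcard]
      exact dvd_pow_self p m.pos.ne'
    have := hpp.dvd_of_dvd_pow this
    exact (Nat.prime_dvd_prime_iff_eq hpp Nat.prime_two).mp this
  subst hp2
  haveI : CharP F 2 := hp
  have h2 : (2 : F) = 0 := by
    have := CharP.cast_eq_zero F 2
    simpa using this
  -- basic facts about δ
  have hδ0 : δ ≠ 0 := by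
    intro h; rw [h] at hδ; simp at hδ
  have hδ1 : δ ≠ 1 := by
    intro h
    rw [h] at hδ
    have : (3 : F) = 0 := by linear_combination hδ
    have : (1 : F) = 0 := by linear_combination this - h2
    exact one_ne_zero this
  have hδ3 : δ ^ 3 = 1 := by linear_combination (δ - 1) * hδ
  have hδ21 : δ ^ 2 ≠ 1 := by
    intro h
    have : δ = 1 := by
      have := hδ3
      rw [pow_succ, h, one_mul] at this
      exact this
    exact hδ1 this
  have hδδ2 : δ ≠ δ ^ 2 := by
    intro h
    have hz : δ * (δ - 1) = 0 := by linear_combination -h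
    rcases mul_eq_zero.mp hz with h' | h'
    · exact hδ0 h'
    · exact hδ1 (by linear_combination h')
  have hsum : (1 : F) + δ + δ ^ 2 = 0 := by linear_combination hδ
  -- exponent computations
  have key : ∀ e : ℕ, e % 3 = 2 →
      x ^ e + (δ * x) ^ e + (δ ^ 2 * x) ^ e = 0 := by
    intro e he
    have h1 : δ ^ e = δ ^ 2 := by rw [aux_pow_mod3 δ hδ3, he]
    have h2e : (δ ^ 2) ^ e = δ := by
      rw [← pow_mul, aux_pow_mod3 δ hδ3]
      have : 2 * e % 3 = 1 := by omega
      rw [this, pow_one]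
    rw [mul_pow, mul_pow, h1, h2e]
    linear_combination x ^ e * hδ
  refine ⟨⟨?_, ?_, ?_⟩, ⟨hx, mul_ne_zero hδ0 hx, mul_ne_zero (pow_ne_zero 2 hδ0) hx⟩, ?_, ?_, ?_⟩
  · intro h
    exact hδ1 ((mul_right_cancel₀ hx (by rw [← h, one_mul])).symm)
  · intro h
    exact hδ21 ((mul_right_cancel₀ hx (by rw [← h, one_mul])).symm)
  · intro h
    exact hδδ2 (mul_right_cancel₀ hx h)
  · linear_combination x * hδ
  · exact key _ (aux_mod3 k hkeven)
  · exact key _ (aux_mod3 (3 * k) (hkeven.mul_left 3))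
end

section
/- Let $n$ be an even positive integer and $k$ an even positive integer, and let $F$ be a finite field with $2^n$ elements. Let $\delta \in F$ satisfy $\delta^2 + \delta + 1 = 0$. Then for every nonzero $x \in F$, the three elements $x, \delta x, \delta^2 x$ are pairwise distinct and nonzero, and $x + \delta x + \delta^2 x = 0$, $x^{2^k+1} + (\delta x)^{2^k+1} + (\delta^2 x)^{2^k+1} = 0$, and $x^{2^{2k}+1} + (\delta x)^{2^{2k}+1} + (\delta^2 x)^{2^{2k}+1} = 0$. (Hence for $n$ and $k$ even the code with zero set $\{1, 2^k+1, 2^{2k}+1\}$ has a codeword of weight three.) -/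
theorem stmt_7 (n k : ℕ) (hn : 0 < n) (hneven : Even n) (hk : 0 < k) (hkeven : Even k)
    (F : Type*) [Field F] [Fintype F] (hF : Fintype.card F = 2 ^ n)
    (δ : F) (hδ : δ ^ 2 + δ + 1 = 0)
    (x : F) (hx : x ≠ 0) :
    (x ≠ δ * x ∧ x ≠ δ ^ 2 * x ∧ δ * x ≠ δ ^ 2 * x) ∧
    (x ≠ 0 ∧ δ * x ≠ 0 ∧ δ ^ 2 * x ≠ 0) ∧
    x + δ * x + δ ^ 2 * x = 0 ∧
    x ^ (2 ^ k + 1) + (δ * x) ^ (2 ^ k + 1) + (δ ^ 2 * x) ^ (2 ^ k + 1) = 0 ∧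
    x ^ (2 ^ (2 * k) + 1) + (δ * x) ^ (2 ^ (2 * k) + 1) + (δ ^ 2 * x) ^ (2 ^ (2 * k) + 1) = 0 := by
  -- The field has characteristic 2
  have hcard : ((Fintype.card F : F)) = 0 := FiniteField.cast_card_eq_zero F
  rw [hF] at hcard
  push_cast at hcard
  have h2 : (2 : F) = 0 := pow_eq_zero_iff hn.ne' |>.mp hcard
  have hδ0 : δ ≠ 0 := by
    intro h; rw [h] at hδ; simp at hδ
  -- δ² = δ + 1 (char 2)
  have hsq : δ ^ 2 = δ + 1 := by linear_combination hδ - (δ + 1) * h2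
  have hδ1 : δ ≠ 1 := by
    intro h
    rw [h] at hsq
    exact one_ne_zero (by linear_combination hsq + h2)
  have hδsq1 : δ ^ 2 ≠ 1 := by
    rw [hsq]; intro h
    exact hδ0 (by linear_combination h)
  have hδδ2 : δ ≠ δ ^ 2 := by
    intro h
    have h1 : (1 : F) = δ := mul_left_cancel₀ hδ0
      (show δ * 1 = δ * δ by rw [mul_one, ← sq]; exact h)
    exact hδ1 h1.symm
  have h3 : δ ^ 3 = 1 := by linear_combination (δ - 1) * hδ
  -- for even j, δ ^ (2^j) = δ
  have hpow : ∀ j : ℕ, Even j → δ ^ (2 ^ j) = δ := by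
    intro j hj
    obtain ⟨m, hm⟩ := hj
    have hmod : 2 ^ j % 3 = 1 := by
      subst hm
      rw [show m + m = 2 * m by ring, pow_mul, Nat.pow_mod]
      norm_num
    have hdecomp : 2 ^ j = 3 * (2 ^ j / 3) + 1 := by omega
    rw [hdecomp, pow_add, pow_mul, h3, one_pow, one_mul, pow_one]
  have hk' : δ ^ (2 ^ k) = δ := hpow k hkeven
  have hk2' : δ ^ (2 ^ (2 * k)) = δ := hpow (2 * k) ⟨k, two_mul k⟩
  have key : ∀ j : ℕ, δ ^ (2 ^ j) = δ →
      x ^ (2 ^ j + 1) + (δ * x) ^ (2 ^ j + 1) + (δ ^ 2 * x) ^ (2 ^ j + 1) = 0 := by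
    intro j hj
    have e1 : δ ^ (2 ^ j + 1) = δ ^ 2 := by rw [pow_add, hj, pow_one, sq]
    have e2 : (δ ^ 2) ^ (2 ^ j + 1) = δ := by
      rw [← pow_mul, show 2 * (2 ^ j + 1) = (2 ^ j + 1) + (2 ^ j + 1) by ring, pow_add,
        e1, ← pow_add, show 2 + 2 = 3 + 1 by rfl, pow_add, h3, one_mul, pow_one]
    rw [mul_pow, mul_pow, e1, e2]
    ring_nf
    linear_combination x ^ (2 ^ j + 1) * hδ
  refine ⟨⟨?_, ?_, ?_⟩, ⟨hx, mul_ne_zero hδ0 hx, mul_ne_zero (pow_ne_zero 2 hδ0) hx⟩,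
    ?_, key k hk', key (2 * k) hk2'⟩
  · intro h
    exact hδ1 (mul_right_cancel₀ hx (show (1 : F) * x = δ * x by rw [one_mul]; exact h)).symm
  · intro h
    exact hδsq1 (mul_right_cancel₀ hx
      (show (δ ^ 2) * x = 1 * x by rw [one_mul]; exact h.symm))
  · intro h
    exact hδδ2 (mul_right_cancel₀ hx h)
  · linear_combination x * hδ
end

section
/- Let $n, k$ be positive integers with $\gcd(k,n)=1$ and let $F$ be a finite field with $2^n$ elements. Then there is no nonempty set $S$ of at most four distinct nonzero elements of $F$ such that $\sum_{x \in S} x = 0$ and $\sum_{x \in S} x^{2^k+1} = 0$. (Equivalently, the cyclic code of length $2^n-1$ with zero set $\{1, 2^k+1\}$ has minimum distance at least $5$, i.e., it is double-error-correcting.) -/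
/-!
Write `q = 2 ^ k` and `f x = x ^ (q + 1)`. In characteristic 2, `x ↦ x ^ q` is additive, so
`f (x + y) = f x + f y + (x * y ^ q + x ^ q * y)`. Sets of three or four nonzero elements with
zero sum have the shape `{u, v, u + v}` or `{a, a + u, a + v, a + u + v}` with `u ≠ 0`, `v ≠ 0`,
`u ≠ v`, and in both cases the sum of `f` over the set is `u * v ^ q + u ^ q * v`. If this
vanishes then `(v / u) ^ (q - 1) = 1`; as `gcd (2 ^ k - 1, 2 ^ n - 1) = 2 ^ gcd (k, n) - 1 = 1`,
this forces `u = v`. Sets of one or two elements are excluded directly.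
-/

open Finset

section CharTwo

variable {R : Type*} [CommRing R] [CharP R 2] (k : ℕ)

theorem add_pow_two_pow_add_one (x y : R) :
    (x + y) ^ (2 ^ k + 1) =
      x ^ (2 ^ k + 1) + y ^ (2 ^ k + 1) + (x * y ^ 2 ^ k + x ^ 2 ^ k * y) := by
  rw [pow_succ, add_pow_char_pow]
  ring

theorem sum_four_pow_two_pow_add_one_of_add_eq_zero {a b c d : R} (h : a + b + c + d = 0) :
    a ^ (2 ^ k + 1) + b ^ (2 ^ k + 1) + c ^ (2 ^ k + 1) + d ^ (2 ^ k + 1) =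
      (a + b) * (a + c) ^ 2 ^ k + (a + b) ^ 2 ^ k * (a + c) := by
  obtain rfl : a + b + c = d := CharTwo.add_eq_zero.mp h
  rw [add_pow_two_pow_add_one, add_pow_two_pow_add_one, add_pow_char_pow, add_pow_char_pow]
  linear_combination (b ^ (2 ^ k + 1) + c ^ (2 ^ k + 1)) *
    (CharTwo.two_eq_zero : (2 : R) = 0)

theorem exists_ne_mul_pow_eq_of_sum_eq_zero {S : Finset R} (hne : S.Nonempty) (hcard : #S ≤ 4)
    (h0 : (0 : R) ∉ S) (hsum : ∑ x ∈ S, x = 0) (hpow : ∑ x ∈ S, x ^ (2 ^ k + 1) = 0) :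
    ∃ u v : R, u ≠ 0 ∧ v ≠ 0 ∧ u ≠ v ∧ u * v ^ 2 ^ k = u ^ 2 ^ k * v := by
  classical
  have hpos := hne.card_pos
  interval_cases h : #S
  · obtain ⟨x, rfl⟩ := card_eq_one.mp h
    simp_all
  · obtain ⟨x, y, hxy, rfl⟩ := card_eq_two.mp h
    exact absurd (CharTwo.add_eq_zero.mp (by rwa [sum_pair hxy] at hsum)) hxy
  · obtain ⟨x, y, z, hxy, hxz, hyz, rfl⟩ := card_eq_three.mp h
    simp only [mem_insert, mem_singleton, not_or] at h0
    rw [sum_insert (by simp [hxy, hxz]), sum_pair hyz] at hsum hpow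
    refine ⟨x, y, Ne.symm h0.1, Ne.symm h0.2.1, hxy, CharTwo.add_eq_zero.mp ?_⟩
    have := sum_four_pow_two_pow_add_one_of_add_eq_zero k
      (show 0 + x + y + z = 0 by linear_combination hsum)
    simpa [add_assoc, hpow] using this.symm
  · obtain ⟨a, b, c, d, hab, hac, had, hbc, hbd, hcd, rfl⟩ := card_eq_four.mp h
    rw [sum_insert (by simp [hab, hac, had]), sum_insert (by simp [hbc, hbd]), sum_pair hcd]
      at hsum hpow
    refine ⟨a + b, a + c, fun h ↦ hab (CharTwo.add_eq_zero.mp h),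
      fun h ↦ hac (CharTwo.add_eq_zero.mp h), (add_right_injective a).ne hbc,
      CharTwo.add_eq_zero.mp ?_⟩
    rw [← sum_four_pow_two_pow_add_one_of_add_eq_zero k
      (show a + b + c + d = 0 by linear_combination hsum), ← hpow]
    ring

end CharTwo

theorem FiniteField.eq_of_mul_pow_eq_pow_mul {F : Type*} [Field F] [Fintype F] {m : ℕ}
    (hm : (m - 1).Coprime (Fintype.card F - 1)) {u v : F} (hu : u ≠ 0) (hv : v ≠ 0)
    (h : u * v ^ m = u ^ m * v) : u = v := by
  rcases m with _ | m
  · simpa using h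
  have hpow : (v / u) ^ m = 1 := by
    rw [div_pow, div_eq_one_iff_eq (pow_ne_zero _ hu)]
    refine mul_left_cancel₀ (mul_ne_zero hu hv) ?_
    linear_combination h
  have hone : v / u = 1 :=
    (pow_eq_one_iff_of_coprime hm).mp
      ⟨hpow, FiniteField.pow_card_sub_one_eq_one _ (div_ne_zero hv hu)⟩
  exact ((div_eq_one_iff_eq hu).mp hone).symm

theorem stmt_8_general (n k : ℕ) (hgcd : Nat.gcd k n = 1)
    (F : Type*) [Field F] [Fintype F] (hF : Fintype.card F = 2 ^ n) :
    ¬ ∃ S : Finset F, S.Nonempty ∧ S.card ≤ 4 ∧ (0 : F) ∉ S ∧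
      ∑ x ∈ S, x = 0 ∧
      ∑ x ∈ S, x ^ (2 ^ k + 1) = 0 := by
  have : CharP F 2 := charP_of_card_eq_prime_pow hF
  have hcop : (2 ^ k - 1).Coprime (Fintype.card F - 1) := by
    rw [hF, Nat.Coprime, Nat.pow_sub_one_gcd_pow_sub_one, hgcd, pow_one]
  rintro ⟨S, hne, hcard, h0, hsum, hpow⟩
  obtain ⟨u, v, hu, hv, huv, h⟩ := exists_ne_mul_pow_eq_of_sum_eq_zero k hne hcard h0 hsum hpow
  exact huv (FiniteField.eq_of_mul_pow_eq_pow_mul hcop hu hv h)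

theorem stmt_8 (n k : ℕ) (hn : 0 < n) (hk : 0 < k) (hgcd : Nat.gcd k n = 1)
    (F : Type*) [Field F] [Fintype F] (hF : Fintype.card F = 2 ^ n) :
    ¬ ∃ S : Finset F, S.Nonempty ∧ S.card ≤ 4 ∧ (0 : F) ∉ S ∧
      ∑ x ∈ S, x = 0 ∧
      ∑ x ∈ S, x ^ (2 ^ k + 1) = 0 :=
  stmt_8_general n k hgcd F hF
end

section
/- Let $n, k$ be positive integers with $\gcd(k,n)=1$ and let $F$ be a finite field with $2^n$ elements. Then the function $f(x) = x^{2^k+1}$ is almost perfect nonlinear on $F$: for every nonzero $a \in F$ and every $b \in F$, the equation $(x+a)^{2^k+1} + x^{2^k+1} = b$ has at most two solutions $x \in F$. -/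
/-!
In characteristic 2, with `q = 2 ^ k`, the derivative
`(x + a) ^ (q + 1) + x ^ (q + 1) = x ^ q * a + a ^ q * x + a ^ (q + 1)`
is an additive function of `x` plus a constant, so two solutions `x, y` of
`(x + a) ^ (q + 1) + x ^ (q + 1) = b` satisfy `(x + y) ^ q * a = a ^ q * (x + y)`.
Then `u = (x + y) / a` is fixed by `u ↦ u ^ (2 ^ k)` as well as by `u ↦ u ^ (2 ^ n)`,
hence by `u ↦ u ^ 2` since `gcd k n = 1`; so `u ∈ {0, 1}` and every solution lies in `{y, y + a}`.
-/

theorem pow_pow_gcd_eq_self {M : Type*} [Monoid M] {p m n : ℕ} {u : M}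
    (hm : u ^ p ^ m = u) (hn : u ^ p ^ n = u) : u ^ p ^ m.gcd n = u := by
  have hper : ∀ {j}, Function.IsPeriodicPt (· ^ p) j u ↔ u ^ p ^ j = u := by
    intro j
    rw [Function.IsPeriodicPt, Function.IsFixedPt, pow_iterate]
  exact hper.1 ((hper.2 hm).gcd (hper.2 hn))

namespace FiniteField

variable {F : Type*} [Field F] [Fintype F] {n k : ℕ}

theorem pow_eq_self_of_pow_pow_eq_self {p : ℕ} (hF : Fintype.card F = p ^ n)
    (hgcd : k.gcd n = 1) {u : F} (hu : u ^ p ^ k = u) : u ^ p = u := by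
  have hun : u ^ p ^ n = u := hF ▸ pow_card u
  simpa only [hgcd, pow_one] using pow_pow_gcd_eq_self hu hun

theorem eq_zero_or_eq_of_pow_two_pow_mul_eq (hF : Fintype.card F = 2 ^ n)
    (hgcd : k.gcd n = 1) {a d : F} (ha : a ≠ 0) (hd : d ^ 2 ^ k * a = a ^ 2 ^ k * d) :
    d = 0 ∨ d = a := by
  have hu : (d / a) ^ 2 ^ k = d / a := by
    rw [div_pow, div_eq_div_iff (pow_ne_zero _ ha) ha, hd, mul_comm]
  rcases eq_zero_or_one_of_sq_eq_self (pow_eq_self_of_pow_pow_eq_self hF hgcd hu) with h | h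
  · exact .inl (by simpa [ha] using h)
  · exact .inr ((div_eq_one_iff_eq ha).1 h)

end FiniteField

namespace CharTwo

variable {R : Type*} [CommRing R] [CharP R 2]

theorem add_pow_two_pow_succ_add_pow (x a : R) (k : ℕ) :
    (x + a) ^ (2 ^ k + 1) + x ^ (2 ^ k + 1) = x ^ 2 ^ k * a + a ^ 2 ^ k * x + a ^ (2 ^ k + 1) := by
  rw [pow_succ, add_pow_char_pow, pow_succ, pow_succ]
  linear_combination (x ^ 2 ^ k * x) * CharTwo.two_eq_zero (R := R)

theorem pow_two_pow_mul_eq_of_derivative_eq {x y a b : R} (k : ℕ)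
    (hx : (x + a) ^ (2 ^ k + 1) + x ^ (2 ^ k + 1) = b)
    (hy : (y + a) ^ (2 ^ k + 1) + y ^ (2 ^ k + 1) = b) :
    (x + y) ^ 2 ^ k * a = a ^ 2 ^ k * (x + y) := by
  rw [add_pow_two_pow_succ_add_pow] at hx hy
  rw [add_pow_char_pow]
  linear_combination hx - hy + (y ^ 2 ^ k * a - a ^ 2 ^ k * x) * CharTwo.two_eq_zero (R := R)

end CharTwo

theorem stmt_9_general (n k : ℕ) (hgcd : Nat.gcd k n = 1)
    (F : Type*) [Field F] [Fintype F] (hF : Fintype.card F = 2 ^ n) :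
    ∀ a b : F, a ≠ 0 →
      {x : F | (x + a) ^ (2 ^ k + 1) + x ^ (2 ^ k + 1) = b}.ncard ≤ 2 := by
  intro a b ha
  have : Fact (Nat.Prime 2) := ⟨Nat.prime_two⟩
  have : CharP F 2 := charP_of_card_eq_prime_pow hF
  set S := {x : F | (x + a) ^ (2 ^ k + 1) + x ^ (2 ^ k + 1) = b}
  rcases S.eq_empty_or_nonempty with hS | ⟨y, hy⟩
  · simp [hS]
  have hsub : S ⊆ {y, y + a} := by
    intro x hx
    have hxy := CharTwo.pow_two_pow_mul_eq_of_derivative_eq k hx hy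
    rcases FiniteField.eq_zero_or_eq_of_pow_two_pow_mul_eq hF hgcd ha hxy with h | h
    · exact .inl (CharTwo.add_eq_zero.1 h)
    · exact .inr (show x = y + a by linear_combination h - y * CharTwo.two_eq_zero (R := F))
  calc S.ncard ≤ ({y, y + a} : Set F).ncard := Set.ncard_le_ncard hsub (Set.toFinite _)
    _ ≤ ({y + a} : Set F).ncard + 1 := Set.ncard_insert_le _ _
    _ = 2 := by rw [Set.ncard_singleton]

theorem stmt_9 (n k : ℕ) (hn : 0 < n) (hk : 0 < k) (hgcd : Nat.gcd k n = 1)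
    (F : Type*) [Field F] [Fintype F] (hF : Fintype.card F = 2 ^ n) :
    ∀ a b : F, a ≠ 0 →
      {x : F | (x + a) ^ (2 ^ k + 1) + x ^ (2 ^ k + 1) = b}.ncard ≤ 2 :=
  stmt_9_general n k hgcd F hF
end

section
/- Let $n, k$ be positive integers with $\gcd(k,n)=1$ and let $F$ be a finite field with $2^n$ elements. Let $\beta, \gamma \in F$ with $\beta \neq 0$. Then the equation $\beta r^{2^k+1} + \beta^{2^k} r^{2^k} + \gamma r + \beta^{2^{2k}} = 0$ has at most three solutions $r \in F$. -/
/-!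
Fix a root `r₀`. In characteristic `2` the map `u ↦ u ^ 2 ^ k` is additive, so writing another
root as `r = r₀ + z` and subtracting the equation for `r₀` leaves
`β z ^ (2 ^ k + 1) + A z + B z ^ 2 ^ k = 0` with `A = β r₀ ^ 2 ^ k + γ`, `B = β r₀ + β ^ 2 ^ k`;
dividing by `z ^ (2 ^ k + 1)`, `u = z⁻¹` solves the affine equation `A u ^ 2 ^ k + B u = β`.
Two of its solutions differ by an element of the kernel `{v | A v ^ 2 ^ k = B v}`, and two
nonzero kernel elements have a quotient fixed by `x ↦ x ^ 2 ^ k`. Since `gcd(k, n) = 1`, that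
quotient is fixed by the Frobenius itself, i.e. lies in `𝔽₂`, so it is `1`. Hence the affine
equation has at most two solutions, and the original one at most three roots.
-/

open Function

section Frobenius

variable {F : Type*} [Field F] [Fintype F]

theorem pow_char_eq_self_of_pow_char_pow_eq_self {p n k : ℕ} [Fact p.Prime] [CharP F p]
    (hF : Fintype.card F = p ^ n) (hkn : k.Coprime n) {x : F} (hx : x ^ p ^ k = x) :
    x ^ p = x := by
  have hk : IsPeriodicPt (frobenius F p) k x := by
    rw [IsPeriodicPt, IsFixedPt, iterate_frobenius, hx]
  have hn : IsPeriodicPt (frobenius F p) n x := by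
    rw [IsPeriodicPt, IsFixedPt, iterate_frobenius, ← hF, FiniteField.pow_card]
  have h1 : IsPeriodicPt (frobenius F p) 1 x := hkn.gcd_eq_one ▸ hk.gcd hn
  rwa [IsPeriodicPt, IsFixedPt, iterate_frobenius, pow_one] at h1

theorem eq_zero_or_one_of_pow_two_pow_eq_self {n k : ℕ} (hF : Fintype.card F = 2 ^ n)
    (hkn : k.Coprime n) {x : F} (hx : x ^ 2 ^ k = x) : x = 0 ∨ x = 1 := by
  have : CharP F 2 := charP_of_card_eq_prime_pow hF
  rw [← IsIdempotentElem.iff_eq_zero_or_one, IsIdempotentElem, ← sq]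
  exact pow_char_eq_self_of_pow_char_pow_eq_self hF hkn hx

end Frobenius

section Linearized

variable {F : Type*} [Field F]

theorem div_pow_eq_self_of_mul_pow_eq_mul {q : ℕ} {A B v w : F} (hA : A ≠ 0) (hw : w ≠ 0)
    (hv : A * v ^ q = B * v) (hw' : A * w ^ q = B * w) : (v / w) ^ q = v / w := by
  have hvw : v ^ q * w = v * w ^ q :=
    mul_left_cancel₀ hA (by linear_combination w * hv - v * hw')
  rw [div_pow, div_eq_div_iff (pow_ne_zero q hw) hw, hvw]

theorem setOf_mul_pow_eq_mul_subset_pair {k : ℕ} (hfix : ∀ x : F, x ^ 2 ^ k = x → x = 0 ∨ x = 1)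
    {A : F} (hA : A ≠ 0) (B : F) : ∃ v : F, {u : F | A * u ^ 2 ^ k = B * u} ⊆ {0, v} := by
  by_cases h : ∃ v ≠ 0, A * v ^ 2 ^ k = B * v
  · obtain ⟨v, hv0, hv⟩ := h
    refine ⟨v, fun u hu => ?_⟩
    rcases hfix _ (div_pow_eq_self_of_mul_pow_eq_mul hA hv0 hu hv) with h | h
    · exact Or.inl (div_eq_zero_iff.mp h |>.resolve_right hv0)
    · exact Or.inr (div_eq_one_iff_eq hv0 |>.mp h)
  · push Not at h
    exact ⟨0, fun u hu => Or.inl (by_contra fun hu0 => h u hu0 hu)⟩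

variable [CharP F 2] {k : ℕ}

theorem ncard_setOf_mul_pow_add_mul_eq_le_two (hfix : ∀ x : F, x ^ 2 ^ k = x → x = 0 ∨ x = 1)
    (A B : F) {c : F} (hc : c ≠ 0) : {u : F | A * u ^ 2 ^ k + B * u = c}.ncard ≤ 2 := by
  rcases eq_or_ne A 0 with rfl | hA
  · have hsub : {u : F | 0 * u ^ 2 ^ k + B * u = c} ⊆ {c / B} := by
      intro u hu
      have hu : B * u = c := by simpa using hu
      have hB : B ≠ 0 := by rintro rfl; exact hc (by simpa using hu.symm)
      rw [Set.mem_singleton_iff, eq_div_iff hB, mul_comm, hu]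
    exact (Set.ncard_le_ncard hsub).trans (by simp)
  obtain ⟨v, hv⟩ := setOf_mul_pow_eq_mul_subset_pair hfix hA B
  rcases Set.eq_empty_or_nonempty {u : F | A * u ^ 2 ^ k + B * u = c} with h | ⟨u₀, hu₀⟩
  · simp [h]
  have hmaps : ∀ u ∈ {u : F | A * u ^ 2 ^ k + B * u = c}, u - u₀ ∈ ({0, v} : Set F) := by
    intro u hu
    apply hv
    simp only [Set.mem_ofPred_eq] at hu hu₀ ⊢
    rw [sub_pow_char_pow]
    linear_combination hu - hu₀ - B * (u - u₀) * (CharTwo.two_eq_zero : (2 : F) = 0)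
  calc _ ≤ ({0, v} : Set F).ncard :=
        Set.ncard_le_ncard_of_injOn _ hmaps (fun _ _ _ _ h => sub_left_injective h) (Set.toFinite _)
    _ ≤ 2 := Set.ncard_insert_le _ _ |>.trans (by simp)

theorem inv_add_mem_setOf_of_roots {β γ r₀ r : F}
    (hr₀ : β * r₀ ^ (2 ^ k + 1) + β ^ 2 ^ k * r₀ ^ 2 ^ k + γ * r₀ + β ^ 2 ^ (2 * k) = 0)
    (hr : β * r ^ (2 ^ k + 1) + β ^ 2 ^ k * r ^ 2 ^ k + γ * r + β ^ 2 ^ (2 * k) = 0)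
    (hne : r ≠ r₀) :
    (r + r₀)⁻¹ ∈ {u : F | (β * r₀ ^ 2 ^ k + γ) * u ^ 2 ^ k + (β * r₀ + β ^ 2 ^ k) * u = β} := by
  have hz : r + r₀ ≠ 0 := fun h => hne (CharTwo.add_eq_zero.mp h)
  have hshift : β * (r + r₀) ^ 2 ^ k * (r + r₀) + (β * r₀ ^ 2 ^ k + γ) * (r + r₀)
      + (β * r₀ + β ^ 2 ^ k) * (r + r₀) ^ 2 ^ k = 0 := by
    rw [add_pow_char_pow]
    rw [pow_succ] at hr hr₀
    linear_combination hr + hr₀ + (β * r ^ 2 ^ k * r₀ + β * r₀ ^ 2 ^ k * r + β * r₀ ^ 2 ^ k * r₀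
      - β ^ 2 ^ (2 * k)) * (CharTwo.two_eq_zero : (2 : F) = 0)
  rw [Set.mem_ofPred_eq, inv_pow]
  field_simp
  linear_combination
    hshift - β * (r + r₀) * (r + r₀) ^ 2 ^ k * (CharTwo.two_eq_zero : (2 : F) = 0)

end Linearized

theorem stmt_10_general (n k : ℕ) (hgcd : Nat.gcd k n = 1)
    (F : Type*) [Field F] [Fintype F] (hF : Fintype.card F = 2 ^ n)
    (β γ : F) (hβ : β ≠ 0) :
    {r : F | β * r ^ (2 ^ k + 1) + β ^ (2 ^ k) * r ^ (2 ^ k) + γ * r + β ^ (2 ^ (2 * k)) = 0}.ncard ≤ 3 := by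
  have : CharP F 2 := charP_of_card_eq_prime_pow hF
  set S := {r : F | β * r ^ (2 ^ k + 1) + β ^ (2 ^ k) * r ^ (2 ^ k) + γ * r + β ^ (2 ^ (2 * k)) = 0}
  rcases S.eq_empty_or_nonempty with hS | ⟨r₀, hr₀⟩
  · simp [hS]
  calc S.ncard = (S \ {r₀}).ncard + 1 := (Set.ncard_sdiff_singleton_add_one hr₀).symm
    _ ≤ {u : F | (β * r₀ ^ 2 ^ k + γ) * u ^ 2 ^ k + (β * r₀ + β ^ 2 ^ k) * u = β}.ncard + 1 :=
      Nat.add_le_add_right (Set.ncard_le_ncard_of_injOn (fun r => (r + r₀)⁻¹)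
        (fun r hr => inv_add_mem_setOf_of_roots hr₀ hr.1 hr.2)
        (fun _ _ _ _ h => add_right_cancel (inv_injective h)) (Set.toFinite _)) 1
    _ ≤ 3 := by
      grw [ncard_setOf_mul_pow_add_mul_eq_le_two
        (fun _ => eq_zero_or_one_of_pow_two_pow_eq_self hF hgcd) _ _ hβ]

theorem stmt_10 (n k : ℕ) (hn : 0 < n) (hk : 0 < k) (hgcd : Nat.gcd k n = 1)
    (F : Type*) [Field F] [Fintype F] (hF : Fintype.card F = 2 ^ n)
    (β γ : F) (hβ : β ≠ 0) :
    {r : F | β * r ^ (2 ^ k + 1) + β ^ (2 ^ k) * r ^ (2 ^ k) + γ * r + β ^ (2 ^ (2 * k)) = 0}.ncard ≤ 3 :=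
  stmt_10_general n k hgcd F hF β γ hβ
end

section
/- Let $n, k$ be positive integers with $\gcd(k,n)=1$ and let $F$ be a finite field with $2^n$ elements. If $x, y, z, w \in F$ are pairwise distinct and satisfy $x + y + z + w = 0$, then $x^{2^k+1} + y^{2^k+1} + z^{2^k+1} + w^{2^k+1} \neq 0$. -/
/-!
In characteristic 2 the map `t ↦ t ^ 2 ^ k` is additive, so for `w = x + y + z` the power sum
collapses to `a ^ 2 ^ k * b + a * b ^ 2 ^ k` with `a = x + y`, `b = x + z`. Its vanishing makes
`b / a` a fixed point of the `k`-th power of Frobenius; since every element of `F` is fixed by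
the `n`-th power and `gcd k n = 1`, `b / a` lies in the prime field `{0, 1}`, i.e. `b = 0` or `b = a`,
which contradicts distinctness.
-/

theorem pow_pow_gcd_eq_self_s13 {M : Type*} [Monoid M] {p a b : ℕ} {c : M}
    (ha : c ^ p ^ a = c) (hb : c ^ p ^ b = c) : c ^ p ^ a.gcd b = c := by
  have periodic_iff (e : ℕ) : Function.IsPeriodicPt (· ^ p) e c ↔ c ^ p ^ e = c := by
    simp only [Function.IsPeriodicPt, Function.IsFixedPt, pow_iterate]
  exact (periodic_iff _).1 (((periodic_iff a).2 ha).gcd ((periodic_iff b).2 hb))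

theorem FiniteField.pow_char_eq_self_of_pow_char_pow_eq_self_s13 {K : Type*} [Field K] [Fintype K]
    {p n k : ℕ} (hK : Fintype.card K = p ^ n) (hkn : k.gcd n = 1) {c : K}
    (hc : c ^ p ^ k = c) : c ^ p = c := by
  have hn : c ^ p ^ n = c := hK ▸ FiniteField.pow_card c
  simpa [hkn] using pow_pow_gcd_eq_self_s13 hc hn

theorem CharTwo.sum_four_pow_two_pow_succ {R : Type*} [CommRing R] [CharP R 2] (k : ℕ)
    {x y z w : R} (h : x + y + z + w = 0) :
    x ^ (2 ^ k + 1) + y ^ (2 ^ k + 1) + z ^ (2 ^ k + 1) + w ^ (2 ^ k + 1) =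
      (x + y) ^ 2 ^ k * (x + z) + (x + y) * (x + z) ^ 2 ^ k := by
  have hw : w = x + y + z := (CharTwo.add_eq_zero.1 h).symm
  have h2 : (2 : R) = 0 := CharTwo.two_eq_zero
  subst hw
  simp only [pow_succ, add_pow_char_pow]
  linear_combination (y ^ 2 ^ k * y + z ^ 2 ^ k * z) * h2

theorem stmt_13_general (n k : ℕ) (hgcd : Nat.gcd k n = 1)
    (F : Type*) [Field F] [Fintype F] (hF : Fintype.card F = 2 ^ n)
    (x y z w : F) (hxy : x ≠ y) (hxz : x ≠ z) (hyz : y ≠ z)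
    (hsum : x + y + z + w = 0) :
    x ^ (2 ^ k + 1) + y ^ (2 ^ k + 1) + z ^ (2 ^ k + 1) + w ^ (2 ^ k + 1) ≠ 0 := by
  intro h
  have : CharP F 2 := charP_of_card_eq_prime_pow hF
  rw [CharTwo.sum_four_pow_two_pow_succ k hsum, CharTwo.add_eq_zero] at h
  have ha : x + y ≠ 0 := fun h0 => hxy (CharTwo.add_eq_zero.1 h0)
  have hb : x + z ≠ 0 := fun h0 => hxz (CharTwo.add_eq_zero.1 h0)
  have hc : ((x + z) / (x + y)) ^ 2 ^ k = (x + z) / (x + y) := by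
    rw [div_pow, div_eq_div_iff (pow_ne_zero _ ha) ha]
    linear_combination -h
  rcases eq_zero_or_one_of_sq_eq_self
      (FiniteField.pow_char_eq_self_of_pow_char_pow_eq_self_s13 hF hgcd hc) with hzero | hone
  · exact hb (div_eq_zero_iff.1 hzero |>.resolve_right ha)
  · exact hyz (add_left_cancel ((div_eq_one_iff_eq ha).1 hone)).symm

theorem stmt_13 (n k : ℕ) (hn : 0 < n) (hk : 0 < k) (hgcd : Nat.gcd k n = 1)
    (F : Type*) [Field F] [Fintype F] (hF : Fintype.card F = 2 ^ n)
    (x y z w : F) (hxy : x ≠ y) (hxz : x ≠ z) (hxw : x ≠ w)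
    (hyz : y ≠ z) (hyw : y ≠ w) (hzw : z ≠ w)
    (hsum : x + y + z + w = 0) :
    x ^ (2 ^ k + 1) + y ^ (2 ^ k + 1) + z ^ (2 ^ k + 1) + w ^ (2 ^ k + 1) ≠ 0 :=
  stmt_13_general n k hgcd F hF x y z w hxy hxz hyz hsum
end

section
/- Let $n, k$ be positive integers and let $F$ be a finite field with $2^n$ elements. For all $x, y \in F$ with $x \neq 0$, setting $\beta = x^{2^k} y + x y^{2^k}$, $\gamma = x^{2^{3k}} y + x y^{2^{3k}}$, and $r = x^{2^{2k}-1}$, the identity $\beta r^{2^k+1} + \beta^{2^k} r^{2^k} + \gamma r + \beta^{2^{2k}} = 0$ holds. -/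
theorem stmt_15 (n k : ℕ) (hn : 0 < n) (hk : 0 < k)
    (F : Type*) [Field F] [Fintype F] (hF : Fintype.card F = 2 ^ n)
    (x y : F) (hx : x ≠ 0) :
    (x ^ (2 ^ k) * y + x * y ^ (2 ^ k)) * (x ^ (2 ^ (2 * k) - 1)) ^ (2 ^ k + 1)
      + (x ^ (2 ^ k) * y + x * y ^ (2 ^ k)) ^ (2 ^ k) * (x ^ (2 ^ (2 * k) - 1)) ^ (2 ^ k)
      + (x ^ (2 ^ (3 * k)) * y + x * y ^ (2 ^ (3 * k))) * x ^ (2 ^ (2 * k) - 1)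
      + (x ^ (2 ^ k) * y + x * y ^ (2 ^ k)) ^ (2 ^ (2 * k)) = 0 := by
  -- the characteristic of `F` is 2
  haveI : CharP F (ringChar F) := ringChar.charP F
  obtain ⟨m, hp, hcard⟩ := FiniteField.card F (ringChar F)
  have hchar : ringChar F = 2 := by
    have hdvd : ringChar F ∣ 2 ^ n := by
      rw [← hF, hcard]
      exact dvd_pow_self _ (by positivity)
    exact (Nat.prime_dvd_prime_iff_eq hp Nat.prime_two).mp (hp.dvd_of_dvd_pow hdvd)
  haveI : CharP F 2 := hchar ▸ ringChar.charP F
  haveI : Fact (Nat.Prime 2) := ⟨Nat.prime_two⟩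
  have frob : ∀ (a b : F) (j : ℕ), (a + b) ^ (2 ^ j) = a ^ (2 ^ j) + b ^ (2 ^ j) :=
    fun a b j => add_pow_char_pow a b 2 j
  -- Frobenius expansions of β
  have hb1 : (x ^ 2 ^ k * y + x * y ^ 2 ^ k) ^ 2 ^ k
      = x ^ (2 ^ k * 2 ^ k) * y ^ 2 ^ k + x ^ 2 ^ k * y ^ (2 ^ k * 2 ^ k) := by
    rw [frob, mul_pow, mul_pow, ← pow_mul, ← pow_mul]
  have hb2 : (x ^ 2 ^ k * y + x * y ^ 2 ^ k) ^ 2 ^ (2 * k)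
      = x ^ (2 ^ k * 2 ^ (2 * k)) * y ^ 2 ^ (2 * k)
        + x ^ 2 ^ (2 * k) * y ^ (2 ^ k * 2 ^ (2 * k)) := by
    rw [frob, mul_pow, mul_pow, ← pow_mul, ← pow_mul]
  have e2 : 2 ^ (2 * k) = 2 ^ k * 2 ^ k := by rw [two_mul, pow_add]
  have e3 : 2 ^ (3 * k) = 2 ^ k * 2 ^ k * 2 ^ k := by
    rw [show 3 * k = k + (k + k) by ring, pow_add, pow_add]; ring
  obtain ⟨t, ht⟩ : ∃ t, 2 ^ k * 2 ^ k = t + 1 :=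
    ⟨2 ^ k * 2 ^ k - 1, (Nat.succ_pred_eq_of_pos (by positivity)).symm⟩
  rw [hb1, hb2, e2, e3, ht, Nat.add_sub_cancel]
  ring_nf
  simp [CharTwo.two_eq_zero]
end
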